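/- arXiv:1909.01655 — 6 statements merged into one kernel-verified Lean document; each statement's English description precedes it below -/
import Mathlib

section
/- Let (Φ,η) be an IFS on a complete separable metric space (X,d) satisfying Hypotheses (1) and (2) for some q > 0, A > 0, ρ ∈ (0,1) and x₀ ∈ X. Then the dual transfer operator L* maps 𝒫_q(X) into itself and is a contraction on (𝒫_q(X), W_q) of ratio at most ρ̄ = ρ^{min(1,1/q)}: for all μ₀, μ₁ ∈ 𝒫_q(X), W_q(L*μ₀, L*μ₁) ≤ ρ̄·W_q(μ₀,μ₁). -/
/-!
Push the product measure `η ⊗ μ` forward along `(i, x) ↦ φ i x`: this is `L*μ`. Given a coupling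
`γ` of `μ₀` and `μ₁`, pushing `η ⊗ γ` forward along `(i, x, y) ↦ (φ i x, φ i y)` gives a coupling
of `L*μ₀` and `L*μ₁`, whose cost is at most `ρ` times the cost of `γ` by Tonelli and
Hypothesis (1). Taking the infimum over `γ` gives `C_q(L*μ₀, L*μ₁) ≤ ρ C_q(μ₀, μ₁)`, and raising to
the power `min(1, 1/q)` gives the contraction. The moment bound comes from
`d(φ_i x, x₀)^q ≤ 2^q (d(φ_i x, φ_i x₀)^q + d(φ_i x₀, x₀)^q)` and Hypotheses (1) and (2).
-/

open MeasureTheory ENNReal Set Metric Filter Topology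

noncomputable section

/-- `γ` is a coupling of `μ₀` and `μ₁`, i.e. a measure on the product whose
marginals are `μ₀` and `μ₁`. -/
def IsCoupling {α β : Type*} [MeasurableSpace α] [MeasurableSpace β]
    (γ : Measure (α × β)) (μ₀ : Measure α) (μ₁ : Measure β) : Prop :=
  γ.map Prod.fst = μ₀ ∧ γ.map Prod.snd = μ₁

/-- The optimal transportation cost of exponent `q`:
`C_q(μ₀,μ₁) = inf over couplings γ of ∫ d(x,y)^q dγ(x,y)`. -/
def wCost {X : Type*} [MetricSpace X] [MeasurableSpace X]
    (q : ℝ) (μ₀ μ₁ : Measure X) : ℝ≥0∞ :=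
  ⨅ (γ : Measure (X × X)) (_ : IsCoupling γ μ₀ μ₁),
    ∫⁻ p, ENNReal.ofReal (dist p.1 p.2 ^ q) ∂γ

/-- The Wasserstein distance of exponent `q`: `W_q = C_q^{min(1,1/q)}`. -/
def wDist {X : Type*} [MetricSpace X] [MeasurableSpace X]
    (q : ℝ) (μ₀ μ₁ : Measure X) : ℝ≥0∞ :=
  wCost q μ₀ μ₁ ^ min 1 (1 / q)

/-- The `q`-th moment of a measure `μ` with respect to the base point `x₀`. -/
def moment {X : Type*} [MetricSpace X] [MeasurableSpace X]
    (q : ℝ) (x₀ : X) (μ : Measure X) : ℝ≥0∞ :=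
  ∫⁻ x, ENNReal.ofReal (dist x x₀ ^ q) ∂μ

/-- The dual transfer operator `L*μ = ∫ (φ_i)_* μ dη(i)` of the IFS `(Φ, η)`. -/
def dualTransfer {X : Type*} [MeasurableSpace X] {I : Type*} [MeasurableSpace I]
    (φ : I → X → X) (η : Measure I) (μ : Measure X) : Measure X :=
  η.bind (fun i => μ.map (φ i))

section Measurable

variable {I Y Z : Type*} [MeasurableSpace I] [MeasurableSpace Y] [MeasurableSpace Z]
  {ψ : I → Y → Z}

lemma measurable_map_of_measurable_uncurry (hψ : Measurable fun p : I × Y => ψ p.1 p.2)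
    (ν : Measure Y) [SFinite ν] : Measurable fun i => ν.map (ψ i) := by
  refine Measure.measurable_of_measurable_coe _ fun s hs => ?_
  have hmap (i : I) : ν.map (ψ i) s = ν (Prod.mk i ⁻¹' ((fun p : I × Y => ψ p.1 p.2) ⁻¹' s)) :=
    Measure.map_apply (hψ.comp measurable_prodMk_left) hs
  simpa only [hmap] using measurable_measure_prodMk_left (hψ hs)

lemma bind_map_eq_map_prod (hψ : Measurable fun p : I × Y => ψ p.1 p.2)
    (η : Measure I) [SFinite η] (ν : Measure Y) [SFinite ν] :
    η.bind (fun i => ν.map (ψ i)) = (η.prod ν).map fun p => ψ p.1 p.2 := by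
  ext s hs
  rw [Measure.bind_apply hs (measurable_map_of_measurable_uncurry hψ ν).aemeasurable,
    Measure.map_apply hψ hs, Measure.prod_apply (hψ hs)]
  exact lintegral_congr fun i => Measure.map_apply (hψ.comp measurable_prodMk_left) hs

end Measurable

section DualTransfer

variable {X I : Type*} [MeasurableSpace X] [MeasurableSpace I] {φ : I → X → X}
  (hmeas : Measurable fun p : I × X => φ p.1 p.2) (η : Measure I) [SFinite η]

include hmeas

lemma dualTransfer_eq_map_prod (μ : Measure X) [SFinite μ] :
    dualTransfer φ η μ = (η.prod μ).map fun p => φ p.1 p.2 :=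
  bind_map_eq_map_prod hmeas η μ

lemma isProbabilityMeasure_dualTransfer [IsProbabilityMeasure η] (μ : Measure X)
    [IsProbabilityMeasure μ] : IsProbabilityMeasure (dualTransfer φ η μ) := by
  rw [dualTransfer_eq_map_prod hmeas]
  exact Measure.isProbabilityMeasure_map hmeas.aemeasurable

lemma IsCoupling.dualTransfer {γ : Measure (X × X)} [SFinite γ] {μ₀ μ₁ : Measure X}
    (hγ : IsCoupling γ μ₀ μ₁) :
    IsCoupling ((η.prod γ).map fun p => (φ p.1 p.2.1, φ p.1 p.2.2))
      (dualTransfer φ η μ₀) (dualTransfer φ η μ₁) := by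
  have hΨ : Measurable fun p : I × (X × X) => (φ p.1 p.2.1, φ p.1 p.2.2) := by fun_prop
  obtain ⟨rfl, rfl⟩ := hγ
  constructor
  all_goals
    rw [dualTransfer_eq_map_prod hmeas, ← Measure.map_id (μ := η),
      Measure.map_prod_map _ _ measurable_id (by fun_prop), Measure.map_map hmeas (by fun_prop),
      Measure.map_map (by fun_prop) hΨ, Measure.map_id]
    rfl

end DualTransfer

section Metric

lemma ofReal_dist_rpow_le {X : Type*} [PseudoMetricSpace X] {q : ℝ} (hq : 0 ≤ q) (x y z : X) :
    ENNReal.ofReal (dist x y ^ q)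
      ≤ 2 ^ q * (ENNReal.ofReal (dist x z ^ q) + ENNReal.ofReal (dist y z ^ q)) := by
  simp_rw [← ENNReal.ofReal_rpow_of_nonneg dist_nonneg hq, ← edist_dist]
  calc edist x y ^ q ≤ (edist x z + edist y z) ^ q :=
        ENNReal.rpow_le_rpow (edist_triangle_right x y z) hq
    _ ≤ _ := ENNReal.add_rpow_le_two_rpow_mul_rpow_add_rpow _ _ hq

variable {X I : Type*} [MetricSpace X] [MeasurableSpace X] [BorelSpace X]
  [SecondCountableTopology X] [MeasurableSpace I] {φ : I → X → X}
  (hmeas : Measurable fun p : I × X => φ p.1 p.2) (η : Measure I) [SFinite η]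
  {q : ℝ}

include hmeas

lemma moment_dualTransfer_le (hq : 0 ≤ q) (x₀ : X) {ρ A : ℝ≥0∞}
    (h1 : ∀ x, ∫⁻ i, ENNReal.ofReal (dist (φ i x) (φ i x₀) ^ q) ∂η
      ≤ ρ * ENNReal.ofReal (dist x x₀ ^ q))
    (h2 : ∫⁻ i, ENNReal.ofReal (dist x₀ (φ i x₀) ^ q) ∂η ≤ A)
    (μ : Measure X) [IsProbabilityMeasure μ] :
    moment q x₀ (dualTransfer φ η μ) ≤ 2 ^ q * (ρ * moment q x₀ μ + A) := by
  rw [moment, dualTransfer_eq_map_prod hmeas, lintegral_map (by fun_prop) hmeas]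
  calc ∫⁻ p, ENNReal.ofReal (dist (φ p.1 p.2) x₀ ^ q) ∂η.prod μ
      ≤ ∫⁻ p, 2 ^ q * (ENNReal.ofReal (dist (φ p.1 p.2) (φ p.1 x₀) ^ q)
          + ENNReal.ofReal (dist x₀ (φ p.1 x₀) ^ q)) ∂η.prod μ :=
        lintegral_mono fun p => ofReal_dist_rpow_le hq _ _ _
    _ = 2 ^ q * (∫⁻ x, ∫⁻ i, ENNReal.ofReal (dist (φ i x) (φ i x₀) ^ q) ∂η ∂μ
          + ∫⁻ i, ENNReal.ofReal (dist x₀ (φ i x₀) ^ q) ∂η) := by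
        rw [lintegral_const_mul _ (by fun_prop), lintegral_add_left (by fun_prop),
          lintegral_prod_symm _ (by fun_prop), lintegral_prod _ (by fun_prop)]
        simp only [lintegral_const, measure_univ, mul_one]
    _ ≤ 2 ^ q * (∫⁻ x, ρ * ENNReal.ofReal (dist x x₀ ^ q) ∂μ + A) := by
        gcongr with x
        exact h1 x
    _ = 2 ^ q * (ρ * moment q x₀ μ + A) := by
        rw [lintegral_const_mul _ (by fun_prop), moment]

lemma wCost_dualTransfer_le {ρ : ℝ≥0∞} (hρ₀ : ρ ≠ 0) (hρ : ρ ≠ ∞)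
    (h1 : ∀ x y, ∫⁻ i, ENNReal.ofReal (dist (φ i x) (φ i y) ^ q) ∂η
      ≤ ρ * ENNReal.ofReal (dist x y ^ q))
    (μ₀ μ₁ : Measure X) [IsFiniteMeasure μ₀] :
    wCost q (dualTransfer φ η μ₀) (dualTransfer φ η μ₁) ≤ ρ * wCost q μ₀ μ₁ := by
  simp only [wCost, ENNReal.mul_iInf_of_ne hρ₀ hρ]
  refine le_iInf₂ fun γ hγ => ?_
  have : IsFiniteMeasure γ := by
    obtain ⟨rfl, -⟩ := hγ
    exact Measure.isFiniteMeasure_of_map measurable_fst.aemeasurable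
  refine iInf₂_le_of_le _ (hγ.dualTransfer hmeas η) ?_
  calc ∫⁻ p, ENNReal.ofReal (dist p.1 p.2 ^ q)
        ∂((η.prod γ).map fun p => (φ p.1 p.2.1, φ p.1 p.2.2))
      = ∫⁻ p, ∫⁻ i, ENNReal.ofReal (dist (φ i p.1) (φ i p.2) ^ q) ∂η ∂γ := by
        rw [lintegral_map (by fun_prop) (by fun_prop), lintegral_prod_symm _ (by fun_prop)]
    _ ≤ ∫⁻ p, ρ * ENNReal.ofReal (dist p.1 p.2 ^ q) ∂γ := lintegral_mono fun p => h1 p.1 p.2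
    _ = ρ * ∫⁻ p, ENNReal.ofReal (dist p.1 p.2 ^ q) ∂γ := lintegral_const_mul _ (by fun_prop)

end Metric

theorem stmt1_general
    {X : Type*} [MetricSpace X] [TopologicalSpace.SeparableSpace X]
    [MeasurableSpace X] [BorelSpace X]
    {I : Type*} [MeasurableSpace I]
    (φ : I → X → X)
    (hmeas : Measurable fun p : I × X => φ p.1 p.2)
    (η : Measure I) [IsProbabilityMeasure η]
    (x₀ : X) (q A ρ : ℝ) (hq : 0 < q) (hρ₀ : 0 < ρ)
    (h1 : ∀ x y : X, ∫⁻ i, ENNReal.ofReal (dist (φ i x) (φ i y) ^ q) ∂η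
            ≤ ENNReal.ofReal (ρ * dist x y ^ q))
    (h2 : ∫⁻ i, ENNReal.ofReal (dist x₀ (φ i x₀) ^ q) ∂η ≤ ENNReal.ofReal A) :
    ∀ μ₀ μ₁ : Measure X, IsProbabilityMeasure μ₀ → IsProbabilityMeasure μ₁ →
      moment q x₀ μ₀ < ∞ → moment q x₀ μ₁ < ∞ →
      (moment q x₀ (dualTransfer φ η μ₀) < ∞ ∧
        IsProbabilityMeasure (dualTransfer φ η μ₀)) ∧
      wDist q (dualTransfer φ η μ₀) (dualTransfer φ η μ₁)
        ≤ ENNReal.ofReal (ρ ^ min 1 (1 / q)) * wDist q μ₀ μ₁ := by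
  intro μ₀ μ₁ _ _ hm₀ _
  have := UniformSpace.secondCountable_of_separable X
  have h1' : ∀ x y : X, ∫⁻ i, ENNReal.ofReal (dist (φ i x) (φ i y) ^ q) ∂η
      ≤ ENNReal.ofReal ρ * ENNReal.ofReal (dist x y ^ q) :=
    fun x y => (h1 x y).trans_eq (ENNReal.ofReal_mul hρ₀.le)
  have hr : 0 ≤ min 1 (1 / q) := le_min zero_le_one (by positivity)
  refine ⟨⟨?_, isProbabilityMeasure_dualTransfer hmeas η μ₀⟩, ?_⟩
  · refine (moment_dualTransfer_le hmeas η hq.le x₀ (fun x => h1' x x₀) h2 μ₀).trans_lt ?_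
    finiteness
  · calc wDist q (dualTransfer φ η μ₀) (dualTransfer φ η μ₁)
        ≤ (ENNReal.ofReal ρ * wCost q μ₀ μ₁) ^ min 1 (1 / q) :=
          ENNReal.rpow_le_rpow (wCost_dualTransfer_le hmeas η
            (ENNReal.ofReal_pos.2 hρ₀).ne' ofReal_ne_top h1' μ₀ μ₁) hr
      _ = ENNReal.ofReal (ρ ^ min 1 (1 / q)) * wDist q μ₀ μ₁ := by
          rw [ENNReal.mul_rpow_of_nonneg _ _ hr, ENNReal.ofReal_rpow_of_pos hρ₀, wDist]

/-- **Lemma (contraction of the dual transfer operator).**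
Under hypotheses (1) and (2), the dual transfer operator maps `𝒫_q(X)` into itself
and is a `ρ^{min(1,1/q)}`-contraction for the Wasserstein distance `W_q`. -/
theorem stmt1
    {X : Type*} [MetricSpace X] [CompleteSpace X] [TopologicalSpace.SeparableSpace X]
    [MeasurableSpace X] [BorelSpace X]
    {I : Type*} [MeasurableSpace I]
    (φ : I → X → X) (hcont : ∀ i, Continuous (φ i))
    (hmeas : Measurable fun p : I × X => φ p.1 p.2)
    (η : Measure I) [IsProbabilityMeasure η]
    (x₀ : X) (q A ρ : ℝ) (hq : 0 < q) (hA : 0 < A) (hρ₀ : 0 < ρ) (hρ₁ : ρ < 1)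
    (h1 : ∀ x y : X, ∫⁻ i, ENNReal.ofReal (dist (φ i x) (φ i y) ^ q) ∂η
            ≤ ENNReal.ofReal (ρ * dist x y ^ q))
    (h2 : ∫⁻ i, ENNReal.ofReal (dist x₀ (φ i x₀) ^ q) ∂η ≤ ENNReal.ofReal A) :
    ∀ μ₀ μ₁ : Measure X, IsProbabilityMeasure μ₀ → IsProbabilityMeasure μ₁ →
      moment q x₀ μ₀ < ∞ → moment q x₀ μ₁ < ∞ →
      (moment q x₀ (dualTransfer φ η μ₀) < ∞ ∧
        IsProbabilityMeasure (dualTransfer φ η μ₀)) ∧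
      wDist q (dualTransfer φ η μ₀) (dualTransfer φ η μ₁)
        ≤ ENNReal.ofReal (ρ ^ min 1 (1 / q)) * wDist q μ₀ μ₁ :=
  stmt1_general φ hmeas η x₀ q A ρ hq hρ₀ h1 h2

end
end

section
/- Let (Φ,η) be an IFS on a complete separable metric space (X,d) satisfying Hypotheses (1) and (2) for some q > 0, A > 0, ρ ∈ (0,1) and x₀ ∈ X, and let μ be its unique stationary measure in 𝒫_q(X). Then every stationary measure μ' of (Φ,η) (not assumed a priori to have finite q-th moment) satisfies m_{x₀}^q(μ') ≤ m_{x₀}^q(μ) < ∞; in particular μ' ∈ 𝒫_q(X) and hence μ' = μ, so the stationary measure is unique among all probability measures on X. -/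
open MeasureTheory ENNReal Set Metric Filter Topology

noncomputable section

/-!
If `V : X → ℝ≥0∞` is finite and satisfies the drift inequality `∫ V ∘ φᵢ dη ≤ r V + B` with
`r < 1`, then every stationary probability measure `μ'` has `∫ V dμ' ≤ B / (1 - r)`: iterating
the drift inequality under the truncation at level `m` gives
`∫ min V m dμ' ≤ ∫ min (rⁿ V) m dμ' + B / (1 - r)`, and the first term tends to `0` by dominated
convergence. By the triangle inequality, (1) and (2), `V = d(·, x₀)^q` satisfies such an
inequality with `r = (1 + ε)^q ρ < 1` for small `ε > 0`. Hence every stationary measure lies in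
`𝒫_q(X)`, where the stationary measure is unique.
-/

theorem add_rpow_le_mul_rpow_add_mul_rpow {q : ℝ} (hq : 0 ≤ q) {a b ε : ℝ}
    (ha : 0 ≤ a) (hb : 0 ≤ b) (hε : 0 < ε) :
    (a + b) ^ q ≤ (1 + ε) ^ q * a ^ q + (1 + ε⁻¹) ^ q * b ^ q := by
  have scale : ∀ c x : ℝ, 0 ≤ c → 0 ≤ x → a + b ≤ c * x → (a + b) ^ q ≤ c ^ q * x ^ q :=
    fun c x hc hx h => (Real.rpow_le_rpow (by positivity) h hq).trans_eq (Real.mul_rpow hc hx)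
  rcases le_or_gt b (ε * a) with h | h
  · exact (scale _ _ (by positivity) ha (by linarith)).trans
      (le_add_of_nonneg_right (by positivity))
  · have : a ≤ ε⁻¹ * b := by rw [le_inv_mul_iff₀ hε]; linarith
    exact (scale _ _ (by positivity) hb (by linarith)).trans
      (le_add_of_nonneg_left (by positivity))

theorem exists_pos_one_add_rpow_mul_lt_one (q : ℝ) {ρ : ℝ} (hρ : ρ < 1) :
    ∃ ε > 0, (1 + ε) ^ q * ρ < 1 := by
  have hcont : ContinuousAt (fun ε : ℝ => (1 + ε) ^ q * ρ) 0 :=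
    ((continuousAt_const.add continuousAt_id).rpow_const (Or.inl (by norm_num))).mul
      continuousAt_const
  have hlt : ∀ᶠ ε in 𝓝[>] (0 : ℝ), (1 + ε) ^ q * ρ < 1 :=
    nhdsWithin_le_nhds (hcont.eventually (gt_mem_nhds (by simpa using hρ)))
  obtain ⟨ε, hε, hε_pos⟩ := (hlt.and self_mem_nhdsWithin).exists
  exact ⟨ε, hε_pos, hε⟩

theorem lintegral_rpow_dist_le {X I : Type*} [MetricSpace X] [MeasurableSpace X] [BorelSpace X]
    [MeasurableSpace I] {φ : I → X → X} {η : Measure I} (hφ : ∀ x, Measurable fun i => φ i x)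
    {q ρ A ε : ℝ} (hq : 0 ≤ q) (hε : 0 < ε) {x x₀ : X}
    (h1 : ∫⁻ i, ENNReal.ofReal (dist (φ i x) (φ i x₀) ^ q) ∂η ≤ ENNReal.ofReal (ρ * dist x x₀ ^ q))
    (h2 : ∫⁻ i, ENNReal.ofReal (dist x₀ (φ i x₀) ^ q) ∂η ≤ ENNReal.ofReal A) :
    ∫⁻ i, ENNReal.ofReal (dist (φ i x) x₀ ^ q) ∂η ≤
      ENNReal.ofReal ((1 + ε) ^ q * ρ) * ENNReal.ofReal (dist x x₀ ^ q)
        + ENNReal.ofReal ((1 + ε⁻¹) ^ q * A) := by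
  set c := ENNReal.ofReal ((1 + ε) ^ q)
  set C := ENNReal.ofReal ((1 + ε⁻¹) ^ q)
  have hpt : ∀ i, ENNReal.ofReal (dist (φ i x) x₀ ^ q) ≤
      c * ENNReal.ofReal (dist (φ i x) (φ i x₀) ^ q)
        + C * ENNReal.ofReal (dist x₀ (φ i x₀) ^ q) := by
    intro i
    rw [← ENNReal.ofReal_mul (by positivity), ← ENNReal.ofReal_mul (by positivity),
      ← ENNReal.ofReal_add (by positivity) (by positivity)]
    exact ENNReal.ofReal_le_ofReal <|
      (Real.rpow_le_rpow dist_nonneg (dist_triangle_right _ _ (φ i x₀)) hq).trans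
        (add_rpow_le_mul_rpow_add_mul_rpow hq dist_nonneg dist_nonneg hε)
  have hmeas : Measurable fun i => ENNReal.ofReal (dist x₀ (φ i x₀) ^ q) := by
    have := hφ x₀
    fun_prop
  calc ∫⁻ i, ENNReal.ofReal (dist (φ i x) x₀ ^ q) ∂η
      ≤ c * ∫⁻ i, ENNReal.ofReal (dist (φ i x) (φ i x₀) ^ q) ∂η
        + C * ∫⁻ i, ENNReal.ofReal (dist x₀ (φ i x₀) ^ q) ∂η := by
        rw [← lintegral_const_mul' _ _ ENNReal.ofReal_ne_top, ← lintegral_const_mul _ hmeas,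
          ← lintegral_add_right _ (hmeas.const_mul _)]
        exact lintegral_mono hpt
    _ ≤ c * ENNReal.ofReal (ρ * dist x x₀ ^ q) + C * ENNReal.ofReal A := by gcongr
    _ = _ := by
        rw [← ENNReal.ofReal_mul' (p := (1 + ε) ^ q * ρ) (by positivity), mul_assoc,
          ENNReal.ofReal_mul (p := (1 + ε) ^ q) (by positivity),
          ENNReal.ofReal_mul (p := (1 + ε⁻¹) ^ q) (by positivity)]

section Drift

variable {X I : Type*} [MeasurableSpace X] [MeasurableSpace I] {φ : I → X → X}
  {η : Measure I} {μ : Measure X}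

theorem lintegral_dualTransfer [SFinite η] [SFinite μ]
    (hφ : Measurable fun p : I × X => φ p.1 p.2) {g : X → ℝ≥0∞} (hg : Measurable g) :
    ∫⁻ x, g x ∂dualTransfer φ η μ = ∫⁻ x, ∫⁻ i, g (φ i x) ∂η ∂μ := by
  have hφi : ∀ i, Measurable (φ i) := fun i => hφ.comp measurable_prodMk_left
  have hκ : Measurable fun i => μ.map (φ i) := by
    refine Measure.measurable_of_measurable_coe _ fun s hs => ?_
    simp_rw [Measure.map_apply (hφi _) hs]
    exact measurable_measure_prodMk_left (hφ hs)
  rw [dualTransfer, Measure.lintegral_bind hκ.aemeasurable hg.aemeasurable]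
  simp_rw [lintegral_map hg (hφi _)]
  exact lintegral_lintegral_swap (hg.comp hφ).aemeasurable

variable [IsProbabilityMeasure η] (hφ : Measurable fun p : I × X => φ p.1 p.2)
  (hstat : dualTransfer φ η μ = μ) {V : X → ℝ≥0∞} (hV : Measurable V) {r B : ℝ≥0∞}
  (hdrift : ∀ x, ∫⁻ i, V (φ i x) ∂η ≤ r * V x + B)
include hφ hstat hV hdrift

theorem lintegral_min_le_of_drift [SFinite μ] (a b m : ℝ≥0∞) :
    ∫⁻ x, min (a * V x + b) m ∂μ ≤ ∫⁻ x, min (a * r * V x + (a * B + b)) m ∂μ := by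
  calc ∫⁻ x, min (a * V x + b) m ∂μ
      = ∫⁻ x, ∫⁻ i, min (a * V (φ i x) + b) m ∂η ∂μ := by
        conv_lhs => rw [← hstat]
        exact lintegral_dualTransfer hφ (((hV.const_mul a).add_const b).min measurable_const)
    _ ≤ ∫⁻ x, min (a * r * V x + (a * B + b)) m ∂μ := lintegral_mono fun x => ?_
  calc ∫⁻ i, min (a * V (φ i x) + b) m ∂η
      ≤ min (∫⁻ i, a * V (φ i x) + b ∂η) m :=
        le_min (lintegral_mono fun _ => min_le_left _ _)
          ((lintegral_mono fun _ => min_le_right _ _).trans_eq (by simp))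
    _ = min (a * ∫⁻ i, V (φ i x) ∂η + b) m := by
        rw [lintegral_add_right _ measurable_const, lintegral_const_mul (f := fun i => V (φ i x)) a
          (hV.comp (hφ.comp measurable_prodMk_right))]
        simp
    _ ≤ min (a * (r * V x + B) + b) m := by gcongr; exact hdrift x
    _ = min (a * r * V x + (a * B + b)) m := by ring_nf

theorem lintegral_min_le_of_drift_iterate [SFinite μ] (n : ℕ) (m : ℝ≥0∞) :
    ∫⁻ x, min (V x) m ∂μ ≤ ∫⁻ x, min (r ^ n * V x + B * ∑ k ∈ Finset.range n, r ^ k) m ∂μ := by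
  induction n with
  | zero => simp
  | succ n ih =>
    refine ih.trans ((lintegral_min_le_of_drift hφ hstat hV hdrift _ _ m).trans_eq ?_)
    congr! 3 with x
    rw [pow_succ, Finset.sum_range_succ]
    ring

theorem lintegral_le_of_drift [IsProbabilityMeasure μ] (hV_ne_top : ∀ x, V x ≠ ∞) (hr : r < 1) :
    ∫⁻ x, V x ∂μ ≤ B * (1 - r)⁻¹ := by
  suffices htrunc : ∀ m : ℕ, ∫⁻ x, min (V x) m ∂μ ≤ B * (1 - r)⁻¹ by
    calc ∫⁻ x, V x ∂μ = ∫⁻ x, ⨆ m : ℕ, min (V x) m ∂μ := by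
          simp_rw [← inf_iSup_eq, ENNReal.iSup_natCast, inf_top_eq]
      _ = ⨆ m : ℕ, ∫⁻ x, min (V x) m ∂μ :=
          lintegral_iSup (fun m => hV.min measurable_const)
            fun m m' h x => min_le_min_left _ (Nat.mono_cast h)
      _ ≤ B * (1 - r)⁻¹ := iSup_le htrunc
  intro m
  have hbound : ∀ n, ∫⁻ x, min (V x) m ∂μ ≤ ∫⁻ x, min (r ^ n * V x) m ∂μ + B * (1 - r)⁻¹ := by
    intro n
    refine (lintegral_min_le_of_drift_iterate hφ hstat hV hdrift n m).trans ?_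
    have hgeom : B * ∑ k ∈ Finset.range n, r ^ k ≤ B * (1 - r)⁻¹ := by
      gcongr
      exact (ENNReal.sum_le_tsum _).trans_eq (ENNReal.tsum_geometric r)
    calc ∫⁻ x, min (r ^ n * V x + B * ∑ k ∈ Finset.range n, r ^ k) m ∂μ
        ≤ ∫⁻ x, min (r ^ n * V x) m + B * (1 - r)⁻¹ ∂μ := by
          refine lintegral_mono fun x => ?_
          calc _ ≤ min (r ^ n * V x + B * (1 - r)⁻¹) m := by gcongr
            _ ≤ min (r ^ n * V x + B * (1 - r)⁻¹) (m + B * (1 - r)⁻¹) := by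
                gcongr; exact le_self_add
            _ = _ := min_add_add_right _ _ _
      _ = ∫⁻ x, min (r ^ n * V x) m ∂μ + B * (1 - r)⁻¹ := by
          rw [lintegral_add_right _ measurable_const]
          simp
  have hlim : Tendsto (fun n => ∫⁻ x, min (r ^ n * V x) m ∂μ) atTop (𝓝 0) := by
    have hpt : ∀ x, Tendsto (fun n => min (r ^ n * V x) m) atTop (𝓝 0) := by
      intro x
      simpa using (ENNReal.Tendsto.mul_const (ENNReal.tendsto_pow_atTop_nhds_zero_of_lt_one hr)
        (Or.inr (hV_ne_top x))).min (tendsto_const_nhds (x := (m : ℝ≥0∞)))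
    simpa using tendsto_lintegral_of_dominated_convergence (fun _ => (m : ℝ≥0∞))
      (fun n => (hV.const_mul _).min measurable_const)
      (fun n => ae_of_all _ fun x => min_le_right _ _) (by simp) (ae_of_all _ hpt)
  simpa using ge_of_tendsto' (hlim.add_const _) hbound

end Drift

theorem stmt4_general
    {X : Type*} [MetricSpace X] [MeasurableSpace X] [BorelSpace X]
    {I : Type*} [MeasurableSpace I]
    (φ : I → X → X) (hmeas : Measurable fun p : I × X => φ p.1 p.2)
    (η : Measure I) [IsProbabilityMeasure η]
    (x₀ : X) (q A ρ : ℝ) (hq : 0 < q) (hρ₁ : ρ < 1)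
    (h1 : ∀ x y : X, ∫⁻ i, ENNReal.ofReal (dist (φ i x) (φ i y) ^ q) ∂η
            ≤ ENNReal.ofReal (ρ * dist x y ^ q))
    (h2 : ∫⁻ i, ENNReal.ofReal (dist x₀ (φ i x₀) ^ q) ∂η ≤ ENNReal.ofReal A)
    (μ : Measure X)
    (hμuniq : ∀ ν : Measure X, IsProbabilityMeasure ν → moment q x₀ ν < ∞ →
      dualTransfer φ η ν = ν → ν = μ) :
    ∀ μ' : Measure X, IsProbabilityMeasure μ' → dualTransfer φ η μ' = μ' →
      moment q x₀ μ' ≤ moment q x₀ μ ∧ moment q x₀ μ' < ∞ ∧ μ' = μ := by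
  intro μ' hμ' hstat
  obtain ⟨ε, hε, hρε⟩ := exists_pos_one_add_rpow_mul_lt_one q hρ₁
  have hφx : ∀ x, Measurable fun i => φ i x := fun x => hmeas.comp measurable_prodMk_right
  have hr : ENNReal.ofReal ((1 + ε) ^ q * ρ) < 1 := ENNReal.ofReal_lt_one.mpr hρε
  have hmom : moment q x₀ μ' ≤
      ENNReal.ofReal ((1 + ε⁻¹) ^ q * A) * (1 - ENNReal.ofReal ((1 + ε) ^ q * ρ))⁻¹ :=
    lintegral_le_of_drift hmeas hstat (by fun_prop)
      (fun x => lintegral_rpow_dist_le hφx hq.le hε (h1 x x₀) h2)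
      (fun _ => ENNReal.ofReal_ne_top) hr
  have hfin : moment q x₀ μ' < ∞ :=
    hmom.trans_lt (ENNReal.mul_lt_top ENNReal.ofReal_lt_top
      (ENNReal.inv_lt_top.mpr (tsub_pos_of_lt hr)))
  obtain rfl := hμuniq μ' hμ' hfin hstat
  exact ⟨le_rfl, hfin, rfl⟩

/-- **Lemma.** Under hypotheses (1) and (2), if `μ` is the unique stationary measure in
`𝒫_q(X)`, then every stationary probability measure `μ'` (not assumed a priori to have
finite `q`-th moment) satisfies `m_{x₀}^q(μ') ≤ m_{x₀}^q(μ) < ∞`; in particular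
`μ' ∈ 𝒫_q(X)` and hence `μ' = μ`: the stationary measure is unique among all
probability measures on `X`. -/
theorem stmt4
    {X : Type*} [MetricSpace X] [CompleteSpace X] [TopologicalSpace.SeparableSpace X]
    [MeasurableSpace X] [BorelSpace X]
    {I : Type*} [MeasurableSpace I]
    (φ : I → X → X) (hcont : ∀ i, Continuous (φ i))
    (hmeas : Measurable fun p : I × X => φ p.1 p.2)
    (η : Measure I) [IsProbabilityMeasure η]
    (x₀ : X) (q A ρ : ℝ) (hq : 0 < q) (hA : 0 < A) (hρ₀ : 0 < ρ) (hρ₁ : ρ < 1)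
    (h1 : ∀ x y : X, ∫⁻ i, ENNReal.ofReal (dist (φ i x) (φ i y) ^ q) ∂η
            ≤ ENNReal.ofReal (ρ * dist x y ^ q))
    (h2 : ∫⁻ i, ENNReal.ofReal (dist x₀ (φ i x₀) ^ q) ∂η ≤ ENNReal.ofReal A)
    (μ : Measure X) (hμprob : IsProbabilityMeasure μ)
    (hμmom : moment q x₀ μ < ∞) (hμstat : dualTransfer φ η μ = μ)
    (hμuniq : ∀ ν : Measure X, IsProbabilityMeasure ν → moment q x₀ ν < ∞ →
      dualTransfer φ η ν = ν → ν = μ) :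
    ∀ μ' : Measure X, IsProbabilityMeasure μ' → dualTransfer φ η μ' = μ' →
      moment q x₀ μ' ≤ moment q x₀ μ ∧ moment q x₀ μ' < ∞ ∧ μ' = μ :=
  stmt4_general φ hmeas η x₀ q A ρ hq hρ₁ h1 h2 μ hμuniq

end
end

section
/- Let (Φ,η) be an IFS on a complete separable metric space (X,d) whose maps φ_i are all Lipschitz. If ∫ log Lip(φ_i) dη(i) < 0 and there exists p > 0 with ∫ Lip(φ_i)^p dη(i) < ∞, then there exist q > 0 and ρ ∈ (0,1) such that ∫ d(φ_i(x),φ_i(y))^q dη(i) ≤ ρ·d(x,y)^q for all x,y ∈ X. -/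
/-! Write `ℓ = log Lip(φ_i)`, so that `∫ ℓ⁺ < ∫ ℓ⁻`. Pick a bounded simple `t ≤ ℓ⁻` with
`∫ ℓ⁺ < ∫ t` and truncate `ℓ` below at `-t`. Since `exp y ≤ 1 + y + y² max 1 (exp y)`, for
`0 < q ≤ p / 2` this gives `∫ Lip^q ≤ 1 - q (∫ t - ∫ ℓ⁺) + q² (c² + 8 p⁻² (∫ Lip^p + 1))`, where `c`
bounds `t`; the right-hand side is `< 1` for small `q`. As `i ↦ Lip(φ_i)` need not be measurable,
the estimate is proved for a measurable minorant of `Lip^q` with the same lower integral. -/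

open MeasureTheory ENNReal NNReal Set Metric Filter Topology
open ENNReal (ofReal)

noncomputable section

def lipConst {X : Type*} [MetricSpace X] (f : X → X) : ℝ :=
  sInf {C : ℝ | 0 ≤ C ∧ ∀ x y : X, dist (f x) (f y) ≤ C * dist x y}

namespace Real

lemma exp_le_one_add_mul_exp (y : ℝ) : exp y ≤ 1 + y * exp y := by
  have h := mul_le_mul_of_nonneg_right (one_sub_le_exp_neg y) (exp_pos y).le
  rw [← exp_add, neg_add_cancel, exp_zero] at h
  linarith

lemma exp_le_one_add_add_sq_mul_exp {y : ℝ} (hy : 0 ≤ y) : exp y ≤ 1 + y + y ^ 2 * exp y := by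
  have h := exp_le_one_add_mul_exp y
  nlinarith [mul_le_mul_of_nonneg_left h hy]

lemma exp_le_one_add_add_sq {y : ℝ} (hy : y ≤ 0) : exp y ≤ 1 + y + y ^ 2 := by
  have h := exp_le_one_add_mul_exp y
  nlinarith [add_one_le_exp y]

lemma sq_mul_exp_mul_le {p q w : ℝ} (hp : 0 < p) (hqp : q ≤ p / 2) (hw : 0 ≤ w) :
    w ^ 2 * exp (q * w) ≤ 8 / p ^ 2 * exp (p * w) := by
  have hsq : (p * w / 2) ^ 2 / 2 ≤ exp (p * w / 2) := by
    nlinarith [quadratic_le_exp_of_nonneg (by positivity : 0 ≤ p * w / 2)]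
  have hexp : exp (q * w) ≤ exp (p * w / 2) := exp_le_exp.2 (by nlinarith)
  calc w ^ 2 * exp (q * w) = 8 / p ^ 2 * ((p * w / 2) ^ 2 / 2) * exp (q * w) := by
        field_simp; ring
    _ ≤ 8 / p ^ 2 * exp (p * w / 2) * exp (p * w / 2) := by gcongr
    _ = 8 / p ^ 2 * exp (p * w) := by rw [mul_assoc, ← exp_add]; ring_nf

lemma exp_mul_le_of_neg_le {p q c w : ℝ} (hp : 0 < p) (hq : 0 ≤ q) (hqp : q ≤ p / 2)
    (hw : -c ≤ w) : exp (q * w) ≤ 1 + q * w + q ^ 2 * (c ^ 2 + 8 / p ^ 2 * exp (p * w)) := by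
  rcases le_total 0 w with hw0 | hw0
  · have := sq_mul_exp_mul_le hp hqp hw0
    calc exp (q * w) ≤ 1 + q * w + (q * w) ^ 2 * exp (q * w) :=
          exp_le_one_add_add_sq_mul_exp (by positivity)
      _ ≤ 1 + q * w + q ^ 2 * (c ^ 2 + 8 / p ^ 2 * exp (p * w)) := by
          rw [mul_pow, mul_assoc]; gcongr; nlinarith [sq_nonneg c]
  · calc exp (q * w) ≤ 1 + q * w + (q * w) ^ 2 := exp_le_one_add_add_sq (by nlinarith)
      _ ≤ 1 + q * w + q ^ 2 * (c ^ 2 + 8 / p ^ 2 * exp (p * w)) := by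
          rw [mul_pow]
          have : w ^ 2 ≤ c ^ 2 := by
            simpa using pow_le_pow_left₀ (neg_nonneg.2 hw0) (neg_le.1 hw) 2
          gcongr
          have : 0 ≤ 8 / p ^ 2 * exp (p * w) := by positivity
          linarith

lemma neg_le_log_max_exp_neg (u t : ℝ) : -t ≤ log (max u (exp (-t))) := by
  simpa using log_le_log (exp_pos (-t)) (le_max_right u _)

lemma log_max_exp_neg_le {u t L : ℝ} (huL : u ≤ L) (ht : 0 ≤ t) :
    log (max u (exp (-t))) ≤ max (log L) 0 := by
  have hexp : exp (-t) ≤ 1 := exp_le_one_iff.2 (neg_nonpos.2 ht)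
  rcases le_or_gt (max u (exp (-t))) 1 with h | h
  · exact (log_nonpos (by positivity) h).trans (le_max_right _ _)
  · have hu : 1 < u := (lt_max_iff.1 h).resolve_right hexp.not_gt
    rw [max_eq_left (hexp.trans hu.le)]
    exact (log_le_log (by linarith) huL).trans (le_max_left _ _)

lemma le_neg_log_max_exp_neg {u t L : ℝ} (hu : 0 ≤ u) (huL : u ≤ L) (ht : 0 ≤ t)
    (htL : t ≤ max (-log L) 0) : t ≤ max (-log (max u (exp (-t)))) 0 := by
  rcases ht.eq_or_lt with rfl | ht
  · exact le_max_right _ _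
  have htL : t ≤ -log L := by
    rcases le_total (-log L) 0 with h | h
    · rw [max_eq_right h] at htL; linarith
    · rwa [max_eq_left h] at htL
  have hL : 0 < L := by
    rcases (hu.trans huL).eq_or_lt with h | h
    · rw [← h, log_zero] at htL; linarith
    · exact h
  have huexp : u ≤ exp (-t) :=
    huL.trans (by rw [← exp_log hL]; exact exp_le_exp.2 (by linarith))
  rw [max_eq_right huexp, log_exp, neg_neg]
  exact le_max_left _ _

lemma max_exp_neg_rpow_le {u t L p : ℝ} (hu : 0 ≤ u) (huL : u ≤ L) (ht : 0 ≤ t)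
    (hp : 0 ≤ p) : max u (exp (-t)) ^ p ≤ L ^ p + 1 := by
  rcases le_total u (exp (-t)) with h | h
  · rw [max_eq_right h]
    have := rpow_le_one (exp_pos _).le (exp_le_one_iff.2 (neg_nonpos.2 ht)) hp
    linarith [rpow_nonneg (hu.trans huL) p]
  · rw [max_eq_left h]
    linarith [rpow_le_rpow hu huL hp]

end Real

lemma exists_pos_one_sub_mul_add_sq_mul_lt_one {b δ M : ℝ} (hb : 0 < b) (hδ : 0 < δ)
    (hM : 0 ≤ M) :
    ∃ q, 0 < q ∧ q ≤ b ∧ 0 < 1 - q * δ + q ^ 2 * M ∧ 1 - q * δ + q ^ 2 * M < 1 := by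
  set q := min b (δ / (M + 2 * δ ^ 2))
  have hq : 0 < q := lt_min hb (by positivity)
  have hqδ : q * (M + 2 * δ ^ 2) ≤ δ := (le_div_iff₀ (by positivity)).1 (min_le_right _ _)
  refine ⟨q, hq, min_le_left _ _, ?_, ?_⟩ <;>
    nlinarith [mul_pos hq hδ, mul_nonneg (sq_nonneg q) hM]

lemma ofReal_exp_mul_add_le {p q c w : ℝ} (hp : 0 < p) (hq : 0 ≤ q) (hqp : q ≤ p / 2)
    (hw : -c ≤ w) :
    ofReal (Real.exp (q * w)) + ofReal q * ofReal (-w) ≤ 1 + ofReal q * ofReal w +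
      ofReal (q ^ 2) * (ofReal (c ^ 2) + ofReal (8 / p ^ 2) * ofReal (Real.exp (p * w))) := by
  have key : Real.exp (q * w) + q * max (-w) 0
      ≤ 1 + q * max w 0 + q ^ 2 * (c ^ 2 + 8 / p ^ 2 * Real.exp (p * w)) := by
    have := Real.exp_mul_le_of_neg_le hp hq hqp hw
    have hsplit : q * w = q * max w 0 - q * max (-w) 0 := by
      rcases le_total 0 w with h | h <;> simp [h]
    linarith
  have h := ofReal_le_ofReal key
  rw [ofReal_add (by positivity) (by positivity), ofReal_mul hq,
    ofReal_add (by positivity) (by positivity), ofReal_add zero_le_one (by positivity),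
    ofReal_mul hq, ofReal_mul (by positivity), ofReal_add (by positivity) (by positivity),
    ofReal_mul (by positivity), ofReal_one] at h
  simpa using h

section

variable {I : Type*} [MeasurableSpace I]

lemma lintegral_exp_mul_add_le (η : Measure I) [IsProbabilityMeasure η] {w : I → ℝ}
    (hw : Measurable w) {p q c : ℝ} (hp : 0 < p) (hq : 0 ≤ q) (hqp : q ≤ p / 2)
    (hwc : ∀ i, -c ≤ w i) :
    ∫⁻ i, ofReal (Real.exp (q * w i)) ∂η + ofReal q * ∫⁻ i, ofReal (-w i) ∂η
      ≤ 1 + ofReal q * ∫⁻ i, ofReal (w i) ∂η + ofReal (q ^ 2) *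
        (ofReal (c ^ 2) + ofReal (8 / p ^ 2) * ∫⁻ i, ofReal (Real.exp (p * w i)) ∂η) := by
  calc _ = ∫⁻ i, (ofReal (Real.exp (q * w i)) + ofReal q * ofReal (-w i)) ∂η := by
        rw [lintegral_add_right _ (by fun_prop), lintegral_const_mul' _ _ ofReal_ne_top]
    _ ≤ ∫⁻ i, (1 + ofReal q * ofReal (w i) + ofReal (q ^ 2) *
        (ofReal (c ^ 2) + ofReal (8 / p ^ 2) * ofReal (Real.exp (p * w i)))) ∂η :=
        lintegral_mono fun i => ofReal_exp_mul_add_le hp hq hqp (hwc i)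
    _ = _ := by
        rw [lintegral_add_right _ (by fun_prop), lintegral_add_left measurable_const,
          lintegral_const_mul' _ _ ofReal_ne_top, lintegral_const_mul' _ _ ofReal_ne_top,
          lintegral_add_left measurable_const, lintegral_const_mul' _ _ ofReal_ne_top]
        simp

lemma exists_bounded_measurable_lt_lintegral_ofReal {η : Measure I} [SigmaFinite η]
    {f : I → ℝ} {r : ℝ≥0∞} (h : r < ∫⁻ i, ofReal (f i) ∂η) :
    ∃ t : I → ℝ, Measurable t ∧ (∃ c, ∀ i, 0 ≤ t i ∧ t i ≤ c) ∧
      (∀ i, t i ≤ max (f i) 0) ∧ r < ∫⁻ i, ofReal (t i) ∂η := by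
  obtain ⟨g, hgf, -, hrg⟩ :=
    exists_lt_lintegral_simpleFunc_of_lt_lintegral (f := fun i => (f i).toNNReal) h
  obtain ⟨c, hc⟩ := g.exists_forall_le
  refine ⟨fun i => (g i : ℝ), g.measurable.coe_nnreal_real,
    ⟨c, fun i => ⟨(g i).coe_nonneg, NNReal.coe_le_coe.2 (hc i)⟩⟩,
    fun i => ?_, by simpa using hrg⟩
  exact (NNReal.coe_le_coe.2 (hgf i)).trans_eq (Real.coe_toNNReal' _)

lemma lintegral_rpow_add_mul_le (η : Measure I) [IsProbabilityMeasure η] {L : I → ℝ}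
    (hL : ∀ i, 0 ≤ L i) {t : I → ℝ} (ht : Measurable t)
    {c : ℝ} (htc : ∀ i, 0 ≤ t i ∧ t i ≤ c) (htL : ∀ i, t i ≤ max (-Real.log (L i)) 0)
    {p q : ℝ} (hp : 0 < p) (hq : 0 < q) (hqp : q ≤ p / 2) :
    ∫⁻ i, ofReal (L i ^ q) ∂η + ofReal q * ∫⁻ i, ofReal (t i) ∂η
      ≤ 1 + ofReal q * ∫⁻ i, ofReal (Real.log (L i)) ∂η + ofReal (q ^ 2) *
        (ofReal (c ^ 2) + ofReal (8 / p ^ 2) * (∫⁻ i, ofReal (L i ^ p) ∂η + 1)) := by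
  obtain ⟨g, hg, hgL, hg_eq⟩ := exists_measurable_le_lintegral_eq η fun i => ofReal (L i ^ q)
  rw [hg_eq]
  set u : I → ℝ := fun i => (g i).toReal ^ q⁻¹
  have hu : ∀ i, 0 ≤ u i := fun i => Real.rpow_nonneg toReal_nonneg _
  have huL : ∀ i, u i ≤ L i := fun i => by
    simpa [hL i, hq.ne'] using Real.rpow_le_rpow toReal_nonneg
      (toReal_le_of_le_ofReal (Real.rpow_nonneg (hL i) q) (hgL i)) (inv_nonneg.2 hq.le)
  -- `w = max (log u) (-t)`, reading `log 0` as `-∞`: a measurable `log L` truncated below at `-t`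
  set w : I → ℝ := fun i => Real.log (max (u i) (Real.exp (-t i)))
  have hw : Measurable w := by fun_prop
  have hexp_w : ∀ r i, Real.exp (r * w i) = max (u i) (Real.exp (-t i)) ^ r := fun r i => by
    rw [Real.rpow_def_of_pos (lt_max_of_lt_right (Real.exp_pos _)), mul_comm]
  have hgw : ∀ i, g i ≤ ofReal (Real.exp (q * w i)) := fun i => by
    calc g i = ofReal (u i ^ q) := by
          rw [Real.rpow_inv_rpow toReal_nonneg hq.ne',
            ofReal_toReal (ne_top_of_le_ne_top ofReal_ne_top (hgL i))]
      _ ≤ _ := by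
          rw [hexp_w]; exact ofReal_le_ofReal (Real.rpow_le_rpow (hu i) (le_max_left _ _) hq.le)
  have hwL : ∀ i, ofReal (w i) ≤ ofReal (Real.log (L i)) := fun i =>
    (ofReal_le_ofReal (Real.log_max_exp_neg_le (huL i) (htc i).1)).trans_eq (by simp)
  have htw : ∀ i, ofReal (t i) ≤ ofReal (-w i) := fun i =>
    (ofReal_le_ofReal (Real.le_neg_log_max_exp_neg (hu i) (huL i) (htc i).1 (htL i))).trans_eq
      (by simp [w])
  have hwp : ∫⁻ i, ofReal (Real.exp (p * w i)) ∂η ≤ ∫⁻ i, ofReal (L i ^ p) ∂η + 1 := by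
    calc _ ≤ ∫⁻ i, (ofReal (L i ^ p) + 1) ∂η := lintegral_mono fun i => by
          rw [hexp_w, ← ofReal_one, ← ofReal_add (Real.rpow_nonneg (hL i) p) zero_le_one]
          exact ofReal_le_ofReal (Real.max_exp_neg_rpow_le (hu i) (huL i) (htc i).1 hp.le)
      _ = _ := by simp [lintegral_add_right _ measurable_const]
  calc _ ≤ ∫⁻ i, ofReal (Real.exp (q * w i)) ∂η + ofReal q * ∫⁻ i, ofReal (-w i) ∂η := by
        gcongr ?_ + _ * ?_
        exacts [lintegral_mono hgw, lintegral_mono htw]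
    _ ≤ _ := lintegral_exp_mul_add_le η hw hp hq.le hqp (c := c) fun i =>
        (neg_le_neg (htc i).2).trans (Real.neg_le_log_max_exp_neg _ _)
    _ ≤ _ := by gcongr 1 + _ * ?_ + _ * (_ + _ * ?_); exact lintegral_mono hwL

theorem exists_lintegral_rpow_le_of_lintegral_log_lt {η : Measure I} [IsProbabilityMeasure η]
    {L : I → ℝ} (hL : ∀ i, 0 ≤ L i)
    (hlog : ∫⁻ i, ofReal (Real.log (L i)) ∂η < ∫⁻ i, ofReal (-Real.log (L i)) ∂η)
    {p : ℝ} (hp : 0 < p) (hmom : ∫⁻ i, ofReal (L i ^ p) ∂η < ∞) :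
    ∃ q : ℝ, 0 < q ∧ ∃ ρ : ℝ, 0 < ρ ∧ ρ < 1 ∧ ∫⁻ i, ofReal (L i ^ q) ∂η ≤ ofReal ρ := by
  obtain ⟨t, ht, ⟨c, htc⟩, htL, hAT⟩ := exists_bounded_measurable_lt_lintegral_ofReal hlog
  have hT : ∫⁻ i, ofReal (t i) ∂η ≠ ∞ :=
    ne_top_of_le_ne_top (ofReal_ne_top (r := c))
      ((lintegral_mono fun i => ofReal_le_ofReal (htc i).2).trans_eq (by simp))
  obtain ⟨a, ha, hA⟩ : ∃ a, 0 ≤ a ∧ ∫⁻ i, ofReal (Real.log (L i)) ∂η = ofReal a :=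
    ⟨_, toReal_nonneg, (ofReal_toReal (hAT.trans_le le_top).ne).symm⟩
  obtain ⟨τ, hτ, hT⟩ : ∃ τ, 0 ≤ τ ∧ ∫⁻ i, ofReal (t i) ∂η = ofReal τ :=
    ⟨_, toReal_nonneg, (ofReal_toReal hT).symm⟩
  obtain ⟨k, hk, hK⟩ : ∃ k, 0 ≤ k ∧ ∫⁻ i, ofReal (L i ^ p) ∂η = ofReal k :=
    ⟨_, toReal_nonneg, (ofReal_toReal hmom.ne).symm⟩
  rw [hA, hT, ofReal_lt_ofReal_iff'] at hAT
  obtain ⟨q, hq, hqp, hρ0, hρ1⟩ := exists_pos_one_sub_mul_add_sq_mul_lt_one (half_pos hp)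
    (sub_pos.2 hAT.1) (M := c ^ 2 + 8 / p ^ 2 * (k + 1)) (by positivity)
  refine ⟨q, hq, _, hρ0, hρ1, ?_⟩
  have hR : 1 + ofReal q * ofReal a + ofReal (q ^ 2) *
      (ofReal (c ^ 2) + ofReal (8 / p ^ 2) * (ofReal k + 1))
      = ofReal (1 + q * a + q ^ 2 * (c ^ 2 + 8 / p ^ 2 * (k + 1))) := by
    rw [ofReal_add (by positivity) (by positivity), ofReal_add zero_le_one (by positivity),
      ofReal_mul hq.le, ofReal_mul (by positivity), ofReal_add (by positivity) (by positivity),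
      ofReal_mul (by positivity), ofReal_add hk zero_le_one, ofReal_one]
  have key := lintegral_rpow_add_mul_le η hL ht htc htL hp hq hqp
  rw [hA, hT, hK, hR, ← ofReal_mul hq.le] at key
  refine (le_sub_of_add_le_right ofReal_ne_top key).trans_eq ?_
  rw [← ofReal_sub _ (by positivity)]
  ring_nf

end

lemma lipConst_nonneg {X : Type*} [MetricSpace X] (f : X → X) : 0 ≤ lipConst f :=
  Real.sInf_nonneg fun _ hC => hC.1

lemma dist_le_lipConst_mul {X : Type*} [MetricSpace X] {f : X → X}
    (hf : ∃ C : ℝ≥0, LipschitzWith C f) (x y : X) :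
    dist (f x) (f y) ≤ lipConst f * dist x y := by
  obtain ⟨C, hC⟩ := hf
  rcases eq_or_ne x y with rfl | hxy
  · simp
  have hd := dist_pos.2 hxy
  rw [← div_le_iff₀ hd]
  exact le_csInf ⟨C, C.2, hC.dist_le_mul⟩ fun C' hC' => (div_le_iff₀ hd).2 (hC'.2 x y)

theorem stmt7_general
    {X : Type*} [MetricSpace X]
    {I : Type*} [MeasurableSpace I]
    (φ : I → X → X) (hlip : ∀ i, ∃ C : ℝ≥0, LipschitzWith C (φ i))
    (η : Measure I) [IsProbabilityMeasure η]
    (hlog : ∫⁻ i, ENNReal.ofReal (Real.log (lipConst (φ i))) ∂η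
        < ∫⁻ i, ENNReal.ofReal (-(Real.log (lipConst (φ i)))) ∂η)
    (hmom : ∃ p : ℝ, 0 < p ∧ ∫⁻ i, ENNReal.ofReal (lipConst (φ i) ^ p) ∂η < ∞) :
    ∃ q : ℝ, 0 < q ∧ ∃ ρ : ℝ, 0 < ρ ∧ ρ < 1 ∧
      ∀ x y : X, ∫⁻ i, ENNReal.ofReal (dist (φ i x) (φ i y) ^ q) ∂η
        ≤ ENNReal.ofReal (ρ * dist x y ^ q) := by
  obtain ⟨p, hp, hmom⟩ := hmom
  obtain ⟨q, hq, ρ, hρ0, hρ1, hρ⟩ :=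
    exists_lintegral_rpow_le_of_lintegral_log_lt (fun i => lipConst_nonneg (φ i)) hlog hp hmom
  refine ⟨q, hq, ρ, hρ0, hρ1, fun x y => ?_⟩
  calc ∫⁻ i, ofReal (dist (φ i x) (φ i y) ^ q) ∂η
      ≤ ∫⁻ i, ofReal (lipConst (φ i) ^ q) * ofReal (dist x y ^ q) ∂η :=
        lintegral_mono fun i => by
          rw [← ofReal_mul (Real.rpow_nonneg (lipConst_nonneg _) q),
            ← Real.mul_rpow (lipConst_nonneg _) dist_nonneg]
          exact ofReal_le_ofReal (Real.rpow_le_rpow dist_nonneg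
            (dist_le_lipConst_mul (hlip i) x y) hq.le)
    _ = (∫⁻ i, ofReal (lipConst (φ i) ^ q) ∂η) * ofReal (dist x y ^ q) :=
        lintegral_mul_const' _ _ ofReal_ne_top
    _ ≤ ofReal ρ * ofReal (dist x y ^ q) := by gcongr
    _ = ofReal (ρ * dist x y ^ q) := (ofReal_mul hρ0.le).symm

/-- **Lemma.** If `∫ log Lip(φ_i) dη(i) < 0` (possibly `-∞`, expressed here by saying
that the upper integral of the positive part of the log is strictly smaller than the
upper integral of its negative part) and `∫ Lip(φ_i)^p dη(i) < ∞` for some `p > 0`,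
then there are `q > 0` and `ρ ∈ (0,1)` such that hypothesis (1) holds:
`∫ d(φ_i(x),φ_i(y))^q dη(i) ≤ ρ·d(x,y)^q` for all `x, y`. -/
theorem stmt7
    {X : Type*} [MetricSpace X] [CompleteSpace X] [TopologicalSpace.SeparableSpace X]
    [MeasurableSpace X] [BorelSpace X]
    {I : Type*} [MeasurableSpace I]
    (φ : I → X → X) (hlip : ∀ i, ∃ C : ℝ≥0, LipschitzWith C (φ i))
    (η : Measure I) [IsProbabilityMeasure η]
    (hlog : ∫⁻ i, ENNReal.ofReal (Real.log (lipConst (φ i))) ∂η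
        < ∫⁻ i, ENNReal.ofReal (-(Real.log (lipConst (φ i)))) ∂η)
    (hmom : ∃ p : ℝ, 0 < p ∧ ∫⁻ i, ENNReal.ofReal (lipConst (φ i) ^ p) ∂η < ∞) :
    ∃ q : ℝ, 0 < q ∧ ∃ ρ : ℝ, 0 < ρ ∧ ρ < 1 ∧
      ∀ x y : X, ∫⁻ i, ENNReal.ofReal (dist (φ i x) (φ i y) ^ q) ∂η
        ≤ ENNReal.ofReal (ρ * dist x y ^ q) :=
  stmt7_general φ hlip η hlog hmom

end
end

section
/- For all p, a ∈ (0,1) and all b < log(1/(1−p)), the stationary measure μ_{a,p} satisfies ∫ e^{bx} dμ_{a,p}(x) = ∏_{k=0}^∞ p/(1 − (1−p)·e^{a^k b}), and this quantity is finite. Moreover there is a constant C(a,p), independent of b, such that ∫ e^{bx} dμ_{a,p}(x) ≤ C(a,p)/(1 − (1−p)e^b) for all b < log(1/(1−p)). -/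
/-!
Write `F(b) = ∫ e^{bx} dμ` and `c(t) = p / (1 - (1-p)e^t)`. Testing stationarity against
`e^{bx}` gives `F(b) = p F(ab) + (1-p) e^b F(b)`, so `F(b) = c(b) F(ab)` as soon as `F(b) < ∞`;
iterating, `F(b) = (∏_{k<K} c(a^k b)) F(a^K b)`, and `F(a^K b) → 1` by dominated convergence.

Finiteness comes from running the same recursion on the truncations `x ↦ e^{b min(a^K x, T)}`:
they are bounded, so the term `(1-p) e^{a^K b} (…)` can be moved to the left side. For
`0 ≤ t ≤ b` one has `c(t) ≤ 1 + κ t ≤ e^{κ t}` with `κ = (1-p)e^b / (1 - (1-p)e^b)`, so the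
partial products stay below `e^{κ b / (1-a)}`; letting `K → ∞`, then `T → ∞`, bounds `F(b)`.
The constant uniform in `b` is `p F(a log(1/(1-p)))`, which dominates `p F(ab)`.
-/

open MeasureTheory ENNReal NNReal Set Metric Filter Topology

noncomputable section

/-- `μ` is a stationary measure of the IFS on `ℝ` with maps `φ₀(x) = ax`
(probability `p`) and `φ₁(x) = x + 1` (probability `1-p`). -/
def HPStationary (a p : ℝ) (μ : Measure ℝ) : Prop :=
  μ = ENNReal.ofReal p • μ.map (fun x => a * x)
      + ENNReal.ofReal (1 - p) • μ.map (fun x => x + 1)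

open Real

namespace ENNReal

theorem ofReal_one_sub_mul {x : ℝ≥0∞} (hx : x ≠ ∞) {d : ℝ} (hd : 0 ≤ d) :
    ENNReal.ofReal (1 - d) * x = x - ENNReal.ofReal d * x := by
  rw [ENNReal.ofReal_sub _ hd, ofReal_one, ENNReal.sub_mul fun _ _ => hx, one_mul]

theorem ofReal_div_mul {c e : ℝ} (he : 0 < e) (y : ℝ≥0∞) :
    ENNReal.ofReal (c / e) * y = ENNReal.ofReal c * y / ENNReal.ofReal e := by
  rw [ENNReal.ofReal_div_of_pos he, ENNReal.div_eq_inv_mul, ENNReal.div_eq_inv_mul, mul_assoc]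

theorem le_ofReal_div_mul_of_le_add_mul {x y : ℝ≥0∞} {c d : ℝ} (hx : x ≠ ∞) (hd₀ : 0 ≤ d)
    (hd₁ : d < 1) (h : x ≤ ENNReal.ofReal c * y + ENNReal.ofReal d * x) :
    x ≤ ENNReal.ofReal (c / (1 - d)) * y := by
  rw [ofReal_div_mul (sub_pos.mpr hd₁),
    ENNReal.le_div_iff_mul_le (Or.inl (by simpa using hd₁)) (Or.inl ofReal_ne_top), mul_comm,
    ofReal_one_sub_mul hx hd₀]
  exact tsub_le_iff_right.mpr h

theorem eq_ofReal_div_mul_of_eq_add_mul {x y : ℝ≥0∞} {c d : ℝ} (hx : x ≠ ∞) (hd₀ : 0 ≤ d)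
    (hd₁ : d < 1) (h : x = ENNReal.ofReal c * y + ENNReal.ofReal d * x) :
    x = ENNReal.ofReal (c / (1 - d)) * y := by
  rw [ofReal_div_mul (sub_pos.mpr hd₁), ENNReal.eq_div_iff (by simpa using hd₁) ofReal_ne_top,
    ofReal_one_sub_mul hx hd₀]
  rw [add_comm] at h
  exact ENNReal.sub_eq_of_eq_add_rev (mul_ne_top ofReal_ne_top hx) h

end ENNReal

theorem pow_mul_le_max_zero {a b : ℝ} (ha₀ : 0 ≤ a) (ha₁ : a ≤ 1) (k : ℕ) :
    a ^ k * b ≤ max b 0 := by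
  rcases le_total b 0 with hb | hb
  · exact (mul_nonpos_of_nonneg_of_nonpos (pow_nonneg ha₀ k) hb).trans (le_max_right _ _)
  · exact (mul_le_of_le_one_left hb (pow_le_one₀ ha₀ ha₁)).trans (le_max_left _ _)

def stepFactor (p t : ℝ) : ℝ := p / (1 - (1 - p) * exp t)

section StepFactor

variable {p : ℝ}

theorem one_sub_mul_exp_lt_one (hp : p < 1) {b : ℝ} (hb : b < Real.log (1 / (1 - p))) :
    (1 - p) * exp b < 1 := by
  have hq : 0 < 1 - p := sub_pos.mpr hp
  rwa [lt_log_iff_exp_lt (by positivity), lt_div_iff₀ hq, mul_comm] at hb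

theorem one_sub_mul_exp_lt_one_of_le (hp : p ≤ 1) {s t : ℝ} (hts : t ≤ s)
    (hs : (1 - p) * exp s < 1) : (1 - p) * exp t < 1 :=
  (mul_le_mul_of_nonneg_left (exp_le_exp.mpr hts) (sub_nonneg.mpr hp)).trans_lt hs

theorem one_sub_mul_exp_max_zero_lt_one (hp : 0 < p) {b : ℝ} (hb : (1 - p) * exp b < 1) :
    (1 - p) * exp (max b 0) < 1 := by
  rcases max_cases b 0 with ⟨hm, -⟩ | ⟨hm, -⟩ <;> rw [hm]
  exacts [hb, by simpa using hp]

theorem stepFactor_nonneg (hp : 0 ≤ p) {t : ℝ} (ht : (1 - p) * exp t < 1) :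
    0 ≤ stepFactor p t :=
  div_nonneg hp (sub_nonneg.mpr ht.le)

theorem stepFactor_le_exp (hp : p ≤ 1) {s t : ℝ} (hs : (1 - p) * exp s < 1) (ht₀ : 0 ≤ t)
    (hts : t ≤ s) :
    stepFactor p t ≤ exp ((1 - p) * exp s / (1 - (1 - p) * exp s) * t) := by
  set q := 1 - p
  set κ := q * exp s / (1 - q * exp s)
  have hq : 0 ≤ q := sub_nonneg.mpr hp
  have hDs : 0 < 1 - q * exp s := sub_pos.mpr hs
  have hexp : exp t ≤ exp s := exp_le_exp.mpr hts
  have hDt : 1 - q * exp s ≤ 1 - q * exp t := by gcongr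
  have hκ : κ * (1 - q * exp s) = q * exp s := div_mul_cancel₀ _ hDs.ne'
  have hκ₀ : 0 ≤ κ := by positivity
  have htangent : exp t * (1 - t) ≤ 1 := by
    have := add_one_le_exp (-t)
    rw [exp_neg] at this
    nlinarith [exp_pos t, mul_inv_cancel₀ (exp_pos t).ne']
  calc stepFactor p t ≤ 1 + κ * t := by
        rw [stepFactor, div_le_iff₀ (by linarith)]
        nlinarith [mul_le_mul_of_nonneg_left hDt (mul_nonneg hκ₀ ht₀),
          mul_le_mul_of_nonneg_left hexp (mul_nonneg hq ht₀)]
    _ ≤ exp (κ * t) := by linarith [add_one_le_exp (κ * t)]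

theorem prod_stepFactor_le {a b : ℝ} (ha₀ : 0 ≤ a) (ha₁ : a < 1) (hp : p ≤ 1)
    (hb₀ : 0 ≤ b) (hb : (1 - p) * exp b < 1) (K : ℕ) :
    ∏ k ∈ Finset.range K, ENNReal.ofReal (stepFactor p (a ^ k * b))
      ≤ ENNReal.ofReal (exp ((1 - p) * exp b / (1 - (1 - p) * exp b) * b / (1 - a))) := by
  set κ := (1 - p) * exp b / (1 - (1 - p) * exp b)
  have hκ₀ : 0 ≤ κ := div_nonneg (mul_nonneg (by linarith) (exp_pos b).le) (by linarith)
  calc ∏ k ∈ Finset.range K, ENNReal.ofReal (stepFactor p (a ^ k * b))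
      ≤ ∏ k ∈ Finset.range K, ENNReal.ofReal (exp (κ * (a ^ k * b))) := by
        gcongr with k
        exact stepFactor_le_exp hp hb (by positivity)
          (mul_le_of_le_one_left hb₀ (pow_le_one₀ ha₀ ha₁.le))
    _ = ENNReal.ofReal (exp (κ * b * ∑ k ∈ Finset.range K, a ^ k)) := by
        rw [← ENNReal.ofReal_prod_of_nonneg fun k _ => (exp_pos _).le, ← exp_sum,
          Finset.mul_sum]
        exact congrArg _ (congrArg _ (Finset.sum_congr rfl fun k _ => by ring))
    _ ≤ ENNReal.ofReal (exp (κ * b / (1 - a))) := by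
        have := geom_sum_Ico_le_of_lt_one (m := 0) (n := K) ha₀ ha₁
        rw [pow_zero, ← Finset.range_eq_Ico] at this
        gcongr
        calc κ * b * ∑ k ∈ Finset.range K, a ^ k ≤ κ * b * (1 / (1 - a)) := by gcongr
          _ = κ * b / (1 - a) := by ring

end StepFactor

def expMoment (μ : Measure ℝ) (b : ℝ) : ℝ≥0∞ := ∫⁻ x, ENNReal.ofReal (exp (b * x)) ∂μ

section ExpMoment

variable {μ : Measure ℝ}

theorem measurable_ofReal_exp_mul (b : ℝ) :
    Measurable fun x : ℝ => ENNReal.ofReal (exp (b * x)) := by fun_prop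

theorem ae_nonneg_of_measure_Iio (hμ : μ (Iio 0) = 0) : ∀ᵐ x ∂μ, 0 ≤ x := by
  simpa [ae_iff, not_le, Iio] using hμ

theorem expMoment_mono (hμ : μ (Iio 0) = 0) {b b' : ℝ} (h : b ≤ b') :
    expMoment μ b ≤ expMoment μ b' :=
  lintegral_mono_ae <| (ae_nonneg_of_measure_Iio hμ).mono fun x hx => by gcongr

theorem expMoment_zero [IsProbabilityMeasure μ] : expMoment μ 0 = 1 := by
  simp [expMoment]

theorem expMoment_ne_zero [NeZero μ] (b : ℝ) : expMoment μ b ≠ 0 := by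
  refine ((lintegral_pos_iff_support (measurable_ofReal_exp_mul b)).mpr ?_).ne'
  simpa [Function.support, exp_pos] using NeZero.ne μ

theorem tendsto_lintegral_comp_pow_mul {a : ℝ} (ha₀ : 0 ≤ a) (ha₁ : a < 1)
    {h : ℝ → ℝ≥0∞} (hh : Continuous h) {g : ℝ → ℝ≥0∞} (hg : ∫⁻ x, g x ∂μ ≠ ∞)
    (hdom : ∀ K : ℕ, ∀ᵐ x ∂μ, h (a ^ K * x) ≤ g x) :
    Tendsto (fun K : ℕ => ∫⁻ x, h (a ^ K * x) ∂μ) atTop (𝓝 (h 0 * μ univ)) := by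
  rw [← lintegral_const]
  refine tendsto_lintegral_of_dominated_convergence g
    (fun K => hh.measurable.comp (measurable_const_mul _)) hdom hg (ae_of_all _ fun x => ?_)
  have hx : Tendsto (fun K : ℕ => a ^ K * x) atTop (𝓝 0) := by
    simpa using (tendsto_pow_atTop_nhds_zero_of_lt_one ha₀ ha₁).mul_const x
  exact (hh.tendsto 0).comp hx

theorem tendsto_expMoment_pow_mul [IsProbabilityMeasure μ] (hμ : μ (Iio 0) = 0) {a b : ℝ}
    (ha₀ : 0 ≤ a) (ha₁ : a < 1) (hfin : expMoment μ (max b 0) ≠ ∞) :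
    Tendsto (fun K : ℕ => expMoment μ (a ^ K * b)) atTop (𝓝 1) := by
  have hlim := tendsto_lintegral_comp_pow_mul ha₀ ha₁
    (h := fun y => ENNReal.ofReal (exp (b * y))) (ENNReal.continuous_ofReal.comp (by fun_prop))
    hfin fun K => (ae_nonneg_of_measure_Iio hμ).mono fun x hx => by
      rw [← mul_assoc, mul_comm b]
      gcongr
      exact pow_mul_le_max_zero ha₀ ha₁.le K
  simp only [mul_zero, exp_zero, ofReal_one, measure_univ, mul_one] at hlim
  refine hlim.congr fun K => ?_
  simp only [expMoment, mul_left_comm b, mul_assoc]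

end ExpMoment

namespace HPStationary

variable {a p : ℝ} {μ : Measure ℝ}

theorem lintegral_eq (h : HPStationary a p μ) {f : ℝ → ℝ≥0∞} (hf : Measurable f) :
    ∫⁻ x, f x ∂μ = ENNReal.ofReal p * ∫⁻ x, f (a * x) ∂μ
      + ENNReal.ofReal (1 - p) * ∫⁻ x, f (x + 1) ∂μ := by
  conv_lhs => rw [h]
  rw [lintegral_add_measure, lintegral_smul_measure, lintegral_smul_measure,
    lintegral_map hf (measurable_const_mul a), lintegral_map hf (measurable_add_const 1)]
  rfl

theorem lintegral_exp_min_le [IsFiniteMeasure μ] (h : HPStationary a p μ) (hp : p ≤ 1)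
    {b s : ℝ} (T : ℝ) (hb : 0 ≤ b) (hs : 0 ≤ s) (hsb : (1 - p) * exp (s * b) < 1) :
    ∫⁻ x, ENNReal.ofReal (exp (b * min (s * x) T)) ∂μ
      ≤ ENNReal.ofReal (stepFactor p (s * b))
        * ∫⁻ x, ENNReal.ofReal (exp (b * min (s * a * x) T)) ∂μ := by
  have hfin : ∫⁻ x, ENNReal.ofReal (exp (b * min (s * x) T)) ∂μ ≠ ∞ := by
    refine ne_top_of_le_ne_top (lintegral_const (ENNReal.ofReal (exp (b * T))) ▸
      mul_ne_top ofReal_ne_top (measure_ne_top μ univ)) (lintegral_mono fun x => ?_)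
    gcongr
    exact min_le_right _ _
  have hshift : ∀ x, ENNReal.ofReal (exp (b * min (s * (x + 1)) T))
      ≤ ENNReal.ofReal (exp (s * b)) * ENNReal.ofReal (exp (b * min (s * x) T)) := by
    intro x
    rw [← ENNReal.ofReal_mul (exp_pos _).le, ← exp_add]
    gcongr
    calc b * min (s * (x + 1)) T ≤ b * (min (s * x) T + s) := by
          gcongr
          rw [← min_add_add_right, mul_add_one]
          exact min_le_min le_rfl (le_add_of_nonneg_right hs)
      _ = s * b + b * min (s * x) T := by ring
  refine le_ofReal_div_mul_of_le_add_mul hfin (by positivity) hsb ?_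
  conv_lhs => rw [h.lintegral_eq (by fun_prop)]
  simp only [mul_assoc s a]
  refine add_le_add_right ?_ _
  calc ENNReal.ofReal (1 - p) * ∫⁻ x, ENNReal.ofReal (exp (b * min (s * (x + 1)) T)) ∂μ
      ≤ ENNReal.ofReal (1 - p) * ∫⁻ x, ENNReal.ofReal (exp (s * b))
          * ENNReal.ofReal (exp (b * min (s * x) T)) ∂μ := by
        gcongr with x
        exact hshift x
    _ = ENNReal.ofReal ((1 - p) * exp (s * b))
          * ∫⁻ x, ENNReal.ofReal (exp (b * min (s * x) T)) ∂μ := by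
        rw [lintegral_const_mul _ (by fun_prop), ← mul_assoc,
          ENNReal.ofReal_mul (sub_nonneg.mpr hp)]

theorem lintegral_exp_min_le_prod [IsFiniteMeasure μ] (h : HPStationary a p μ) (ha₀ : 0 ≤ a)
    (ha₁ : a ≤ 1) (hp : p ≤ 1) {b : ℝ} (T : ℝ) (hb₀ : 0 ≤ b) (hb : (1 - p) * exp b < 1)
    (K : ℕ) :
    ∫⁻ x, ENNReal.ofReal (exp (b * min x T)) ∂μ
      ≤ (∏ k ∈ Finset.range K, ENNReal.ofReal (stepFactor p (a ^ k * b)))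
        * ∫⁻ x, ENNReal.ofReal (exp (b * min (a ^ K * x) T)) ∂μ := by
  induction K with
  | zero => simp
  | succ K ih =>
    refine ih.trans ?_
    rw [Finset.prod_range_succ, mul_assoc, pow_succ]
    gcongr
    exact h.lintegral_exp_min_le hp T hb₀ (pow_nonneg ha₀ K) (one_sub_mul_exp_lt_one_of_le hp
      (mul_le_of_le_one_left hb₀ (pow_le_one₀ ha₀ ha₁)) hb)

theorem expMoment_le_of_nonneg [IsProbabilityMeasure μ] (h : HPStationary a p μ) (ha₀ : 0 ≤ a)
    (ha₁ : a < 1) (hp : p ≤ 1) {b : ℝ} (hb₀ : 0 ≤ b) (hb : (1 - p) * exp b < 1) :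
    expMoment μ b
      ≤ ENNReal.ofReal (exp ((1 - p) * exp b / (1 - (1 - p) * exp b) * b / (1 - a))) := by
  set B := ENNReal.ofReal (exp ((1 - p) * exp b / (1 - (1 - p) * exp b) * b / (1 - a)))
  have htrunc : ∀ n : ℕ, ∫⁻ x, ENNReal.ofReal (exp (b * min x n)) ∂μ ≤ B := by
    intro n
    have hlim := tendsto_lintegral_comp_pow_mul (μ := μ) ha₀ ha₁
      (h := fun y => ENNReal.ofReal (exp (b * min y n)))
      (ENNReal.continuous_ofReal.comp (by fun_prop))
      (g := fun _ => ENNReal.ofReal (exp (b * n))) (by simp)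
      (fun K => ae_of_all _ fun x => by gcongr; exact min_le_right _ _)
    have hB := ENNReal.Tendsto.const_mul hlim (Or.inr ofReal_ne_top : _ ∨ B ≠ ∞)
    simp only [min_eq_left (Nat.cast_nonneg n), mul_zero, exp_zero, ofReal_one, measure_univ,
      mul_one] at hB
    refine ge_of_tendsto' hB fun K =>
      (h.lintegral_exp_min_le_prod ha₀ ha₁.le hp n hb₀ hb K).trans ?_
    gcongr
    exact prod_stepFactor_le ha₀ ha₁ hp hb₀ hb K
  refine le_of_tendsto' (lintegral_tendsto_of_tendsto_of_monotone
    (fun n => by fun_prop) (ae_of_all _ fun x m n hmn => ?_) (ae_of_all _ fun x => ?_)) htrunc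
  · dsimp only
    gcongr
  · refine tendsto_atTop_of_eventually_const (i₀ := ⌈x⌉₊) fun n hn => ?_
    rw [min_eq_left (Nat.ceil_le.mp hn)]

variable [IsProbabilityMeasure μ]

theorem expMoment_lt_top (h : HPStationary a p μ) (hμ : μ (Iio 0) = 0) (ha₀ : 0 ≤ a)
    (ha₁ : a < 1) (hp : p ≤ 1) {b : ℝ} (hb : (1 - p) * exp b < 1) :
    expMoment μ b < ∞ := by
  rcases le_total b 0 with hb₀ | hb₀
  · exact (expMoment_mono hμ hb₀).trans_lt (expMoment_zero (μ := μ) ▸ one_lt_top)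
  · exact (h.expMoment_le_of_nonneg ha₀ ha₁ hp hb₀ hb).trans_lt ofReal_lt_top

theorem expMoment_eq_stepFactor_mul (h : HPStationary a p μ) (hμ : μ (Iio 0) = 0)
    (ha₀ : 0 ≤ a) (ha₁ : a < 1) (hp : p ≤ 1) {b : ℝ} (hb : (1 - p) * exp b < 1) :
    expMoment μ b = ENNReal.ofReal (stepFactor p b) * expMoment μ (a * b) := by
  refine eq_ofReal_div_mul_of_eq_add_mul (h.expMoment_lt_top hμ ha₀ ha₁ hp hb).ne
    (by positivity) hb ?_
  have hshift : ∫⁻ x, ENNReal.ofReal (exp (b * (x + 1))) ∂μ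
      = ENNReal.ofReal (exp b) * expMoment μ b := by
    rw [expMoment, ← lintegral_const_mul _ (measurable_ofReal_exp_mul b)]
    congr with x
    rw [← ENNReal.ofReal_mul (exp_pos b).le, ← exp_add, mul_add_one, add_comm]
  conv_lhs => rw [expMoment, h.lintegral_eq (measurable_ofReal_exp_mul b), hshift]
  rw [ENNReal.ofReal_mul (sub_nonneg.mpr hp), mul_assoc]
  simp only [expMoment, mul_left_comm b a, mul_assoc]

theorem expMoment_eq_prod_mul (h : HPStationary a p μ) (hμ : μ (Iio 0) = 0) (ha₀ : 0 ≤ a)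
    (ha₁ : a < 1) (hp₀ : 0 < p) (hp₁ : p ≤ 1) {b : ℝ} (hb : (1 - p) * exp b < 1) (K : ℕ) :
    expMoment μ b = (∏ k ∈ Finset.range K, ENNReal.ofReal (stepFactor p (a ^ k * b)))
      * expMoment μ (a ^ K * b) := by
  induction K with
  | zero => simp
  | succ K ih =>
    rw [ih, h.expMoment_eq_stepFactor_mul hμ ha₀ ha₁ hp₁
      (one_sub_mul_exp_lt_one_of_le hp₁ (pow_mul_le_max_zero ha₀ ha₁.le K)
        (one_sub_mul_exp_max_zero_lt_one hp₀ hb)),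
      Finset.prod_range_succ, mul_assoc, ← mul_assoc a, ← pow_succ']

theorem tendsto_prod_stepFactor (h : HPStationary a p μ) (hμ : μ (Iio 0) = 0) (ha₀ : 0 ≤ a)
    (ha₁ : a < 1) (hp₀ : 0 < p) (hp₁ : p ≤ 1) {b : ℝ} (hb : (1 - p) * exp b < 1) :
    Tendsto (fun K : ℕ => ∏ k ∈ Finset.range K, ENNReal.ofReal (stepFactor p (a ^ k * b)))
      atTop (𝓝 (expMoment μ b)) := by
  have hlim := ENNReal.Tendsto.const_div (a := expMoment μ b) (tendsto_expMoment_pow_mul hμ ha₀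
    ha₁ (h.expMoment_lt_top hμ ha₀ ha₁ hp₁ (one_sub_mul_exp_max_zero_lt_one hp₀ hb)).ne)
    (Or.inl one_ne_top)
  rw [div_one] at hlim
  refine hlim.congr fun K => ?_
  have hK := one_sub_mul_exp_lt_one_of_le hp₁ (pow_mul_le_max_zero ha₀ ha₁.le K)
    (one_sub_mul_exp_max_zero_lt_one hp₀ hb)
  rw [eq_comm, ENNReal.eq_div_iff (expMoment_ne_zero _)
    (h.expMoment_lt_top hμ ha₀ ha₁ hp₁ hK).ne, mul_comm]
  exact (h.expMoment_eq_prod_mul hμ ha₀ ha₁ hp₀ hp₁ hb K).symm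

theorem exists_forall_expMoment_le (h : HPStationary a p μ) (hμ : μ (Iio 0) = 0)
    (ha₀ : 0 ≤ a) (ha₁ : a < 1) (hp₀ : 0 < p) (hp₁ : p < 1) :
    ∃ C : ℝ, 0 < C ∧ ∀ b : ℝ, b < Real.log (1 / (1 - p)) →
      expMoment μ b ≤ ENNReal.ofReal (C / (1 - (1 - p) * exp b)) := by
  set L := Real.log (1 / (1 - p))
  have hL : 0 < L := Real.log_pos <| (one_lt_div (sub_pos.mpr hp₁)).mpr (by linarith)
  set M := expMoment μ (a * L)
  have hM : M ≠ ∞ := (h.expMoment_lt_top hμ ha₀ ha₁ hp₁.le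
    (one_sub_mul_exp_lt_one hp₁ (mul_lt_of_lt_one_left hL ha₁))).ne
  refine ⟨p * M.toReal, mul_pos hp₀ (toReal_pos (expMoment_ne_zero _) hM), fun b hb => ?_⟩
  have hb' := one_sub_mul_exp_lt_one hp₁ hb
  calc expMoment μ b = ENNReal.ofReal (stepFactor p b) * expMoment μ (a * b) :=
        h.expMoment_eq_stepFactor_mul hμ ha₀ ha₁ hp₁.le hb'
    _ ≤ ENNReal.ofReal (stepFactor p b) * M := by
        gcongr
        exact expMoment_mono hμ (mul_le_mul_of_nonneg_left hb.le ha₀)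
    _ = ENNReal.ofReal (p * M.toReal / (1 - (1 - p) * exp b)) := by
        rw [← ofReal_toReal hM, ← ENNReal.ofReal_mul (stepFactor_nonneg hp₀.le hb'), stepFactor,
          toReal_ofReal toReal_nonneg]
        ring_nf

end HPStationary

/-- **Corollary (exponential moments of `μ_{a,p}`).** For all `p, a ∈ (0,1)` and all
`b < log(1/(1-p))`: `∫ e^{bx} dμ_{a,p}(x) = ∏_{k=0}^∞ p/(1-(1-p)e^{a^k b}) < ∞`
(the infinite product being the limit of its partial products), and there is a
constant `C(a,p)` independent of `b` with
`∫ e^{bx} dμ_{a,p} ≤ C(a,p)/(1-(1-p)e^b)`. -/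
theorem stmt11 (a p : ℝ) (ha : a ∈ Set.Ioo (0:ℝ) 1) (hp : p ∈ Set.Ioo (0:ℝ) 1)
    (μ : Measure ℝ) (hμprob : IsProbabilityMeasure μ)
    (hμpos : μ (Set.Iio (0:ℝ)) = 0) (hμstat : HPStationary a p μ) :
    (∀ b : ℝ, b < Real.log (1 / (1 - p)) →
      (∫⁻ x, ENNReal.ofReal (Real.exp (b * x)) ∂μ) < ∞ ∧
      Filter.Tendsto
        (fun K : ℕ => ∏ k ∈ Finset.range K,
          ENNReal.ofReal (p / (1 - (1 - p) * Real.exp (a ^ k * b))))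
        Filter.atTop (nhds (∫⁻ x, ENNReal.ofReal (Real.exp (b * x)) ∂μ))) ∧
    ∃ C : ℝ, 0 < C ∧ ∀ b : ℝ, b < Real.log (1 / (1 - p)) →
      (∫⁻ x, ENNReal.ofReal (Real.exp (b * x)) ∂μ)
        ≤ ENNReal.ofReal (C / (1 - (1 - p) * Real.exp b)) := by
  obtain ⟨ha₀, ha₁⟩ := ha
  obtain ⟨hp₀, hp₁⟩ := hp
  refine ⟨fun b hb => ?_, hμstat.exists_forall_expMoment_le hμpos ha₀.le ha₁ hp₀ hp₁⟩
  have hb' := one_sub_mul_exp_lt_one hp₁ hb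
  exact ⟨hμstat.expMoment_lt_top hμpos ha₀.le ha₁ hp₁.le hb',
    hμstat.tendsto_prod_stepFactor hμpos ha₀.le ha₁ hp₀ hp₁.le hb'⟩

end
end

section
/- For all p, a ∈ (0,1), there exist constants c > 0 and C > 0 such that for all t ≥ 1: c·(1−p)^t ≤ μ_{a,p}([t,∞)) ≤ C·t·(1−p)^t. -/
open MeasureTheory ENNReal NNReal Set Metric Filter Topology

noncomputable section

/-!
Lower bound: stationarity gives `μ [t, ∞) ≥ (1 - p) μ [t - 1, ∞)`, and `μ [t - ⌈t⌉, ∞) = 1`.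

Upper bound: for the truncated exponential moment `M θ = ∫ min (e^{θx}) B dμ`, stationarity gives
`(1 - (1 - p) e^θ) M θ ≤ p M (aθ)`. Along `aθ, a²θ, …` the factors `p / (1 - (1 - p) e^{a^j θ})`
are at most `1 / (1 - a^j) ≤ exp (a^j / (1 - a))`, so their product stays below
`exp (a / (1 - a)²)`, and `M (a^k θ) → M 0 = 1`. Choosing `(1 - p) e^θ = 1 - p / (2t)` makes the
first factor `2t`, and Markov's inequality at height `e^{θt}` then bounds `μ [t, ∞)` by
`4 exp (a / (1 - a)²) t (1 - p)^t`, since `(1 - p / (2t))^t ≥ 1/2` by Bernoulli.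
-/

lemma measure_Ici_eq_one_of_nonpos {μ : Measure ℝ} [IsProbabilityMeasure μ]
    (hμ : μ (Iio 0) = 0) {s : ℝ} (hs : s ≤ 0) : μ (Ici s) = 1 := by
  rw [← compl_Iio, prob_compl_eq_one_iff measurableSet_Iio]
  exact measure_mono_null (Iio_subset_Iio hs) hμ

lemma mul_one_sub_le_one_sub_mul_exp_mul {p e θ : ℝ} (hp : p ≤ 1) (he0 : 0 ≤ e) (he1 : e ≤ 1)
    (hθ : (1 - p) * Real.exp θ ≤ 1) :
    p * (1 - e) ≤ 1 - (1 - p) * Real.exp (e * θ) := by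
  have hconc : Real.exp (e * θ) ≤ 1 + e * (Real.exp θ - 1) := by
    rw [mul_comm, Real.exp_mul]
    simpa using rpow_one_add_le_one_add_mul_self (s := Real.exp θ - 1)
      (by linarith [Real.exp_pos θ]) he0 he1
  nlinarith [mul_le_mul_of_nonneg_left hconc (sub_nonneg.2 hp)]

lemma half_le_one_sub_div_rpow {x t : ℝ} (hx : x ≤ 1) (ht : 1 ≤ t) :
    1 / 2 ≤ (1 - x / (2 * t)) ^ t := by
  have hxt : x / (2 * t) ≤ 1 := (div_le_one (by linarith)).2 (by linarith)
  calc 1 / 2 ≤ 1 + t * -(x / (2 * t)) := by field_simp; linarith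
    _ ≤ (1 + -(x / (2 * t))) ^ t := one_add_mul_self_le_rpow_one_add (by linarith) ht
    _ = (1 - x / (2 * t)) ^ t := by rw [← sub_eq_add_neg]

/-- Truncated at height `B` so that it is finite before anything is known about the tail of `μ`. -/
def truncExpMoment (μ : Measure ℝ) (B θ : ℝ) : ℝ :=
  ∫ x, min (Real.exp (θ * x)) B ∂μ

section truncExpMoment

variable {μ : Measure ℝ} {B : ℝ}

lemma integrable_min_exp [IsFiniteMeasure μ] (hB : 0 ≤ B) (θ : ℝ) :
    Integrable (fun x => min (Real.exp (θ * x)) B) μ :=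
  (integrable_const B).mono' (by fun_prop) <| ae_of_all _ fun x => by
    rw [Real.norm_of_nonneg (le_min (Real.exp_pos _).le hB)]
    exact min_le_right _ _

lemma truncExpMoment_nonneg (hB : 0 ≤ B) (θ : ℝ) : 0 ≤ truncExpMoment μ B θ :=
  integral_nonneg fun _ => le_min (Real.exp_pos _).le hB

lemma truncExpMoment_zero [IsProbabilityMeasure μ] (hB : 1 ≤ B) : truncExpMoment μ B 0 = 1 := by
  simp [truncExpMoment, min_eq_left hB]

lemma continuous_truncExpMoment [IsFiniteMeasure μ] (hB : 0 ≤ B) :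
    Continuous (truncExpMoment μ B) :=
  continuous_of_dominated (fun θ => (integrable_min_exp hB θ).aestronglyMeasurable)
    (fun θ => ae_of_all _ fun x => by
      rw [Real.norm_of_nonneg (le_min (Real.exp_pos _).le hB)]
      exact min_le_right _ _)
    (integrable_const B) (ae_of_all _ fun x => by fun_prop)

lemma exp_mul_measureReal_Ici_le [IsFiniteMeasure μ] {θ : ℝ} (hθ : 0 ≤ θ) (t : ℝ) :
    Real.exp (θ * t) * μ.real (Ici t) ≤ truncExpMoment μ (Real.exp (θ * t)) θ := by
  refine le_trans ?_ (mul_meas_ge_le_integral_of_nonneg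
    (ae_of_all _ fun _ => le_min (Real.exp_pos _).le (Real.exp_pos _).le)
    (integrable_min_exp (Real.exp_pos _).le θ) (Real.exp (θ * t)))
  refine mul_le_mul_of_nonneg_left (measureReal_mono fun x hx => ?_) (Real.exp_pos _).le
  exact le_min (Real.exp_le_exp.2 (mul_le_mul_of_nonneg_left hx hθ)) le_rfl

end truncExpMoment

namespace HPStationary

variable {a p : ℝ} {μ : Measure ℝ}

lemma integral_eq (h : HPStationary a p μ) (hp0 : 0 ≤ p) (hp1 : p ≤ 1) {f : ℝ → ℝ}
    (hfm : Measurable f) (hfi : Integrable f μ) :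
    ∫ x, f x ∂μ = p * ∫ x, f (a * x) ∂μ + (1 - p) * ∫ x, f (x + 1) ∂μ := by
  have h₀ := hfi.mono_measure ((Measure.le_add_right le_rfl).trans (Eq.symm h).le)
  have h₁ := hfi.mono_measure ((Measure.le_add_left le_rfl).trans (Eq.symm h).le)
  conv_lhs => rw [h]
  rw [integral_add_measure h₀ h₁, integral_smul_measure, integral_smul_measure,
    integral_map (by fun_prop) hfm.aestronglyMeasurable,
    integral_map (by fun_prop) hfm.aestronglyMeasurable,
    ENNReal.toReal_ofReal hp0, ENNReal.toReal_ofReal (sub_nonneg.2 hp1), smul_eq_mul,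
    smul_eq_mul]

lemma ofReal_one_sub_mul_measure_Ici_le (h : HPStationary a p μ) (t : ℝ) :
    ENNReal.ofReal (1 - p) * μ (Ici (t - 1)) ≤ μ (Ici t) := by
  conv_rhs => rw [h]
  rw [Measure.add_apply, Measure.smul_apply, Measure.smul_apply,
    Measure.map_apply (measurable_add_const 1) measurableSet_Ici, preimage_add_const_Ici,
    smul_eq_mul]
  exact le_add_self

lemma ofReal_one_sub_pow_mul_measure_Ici_le (h : HPStationary a p μ) (t : ℝ) (n : ℕ) :
    ENNReal.ofReal (1 - p) ^ n * μ (Ici (t - n)) ≤ μ (Ici t) := by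
  induction n generalizing t with
  | zero => simp
  | succ n ih =>
    calc ENNReal.ofReal (1 - p) ^ (n + 1) * μ (Ici (t - ↑(n + 1)))
        = ENNReal.ofReal (1 - p) ^ n * (ENNReal.ofReal (1 - p) * μ (Ici (t - n - 1))) := by
          push_cast; ring_nf
      _ ≤ ENNReal.ofReal (1 - p) ^ n * μ (Ici (t - n)) := by
          gcongr; exact h.ofReal_one_sub_mul_measure_Ici_le _
      _ ≤ μ (Ici t) := ih t

lemma ofReal_mul_rpow_le_measure_Ici [IsProbabilityMeasure μ] (h : HPStationary a p μ)
    (hμ : μ (Iio 0) = 0) (hp0 : 0 ≤ p) (hp1 : p < 1) {t : ℝ} (ht : 0 ≤ t) :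
    ENNReal.ofReal ((1 - p) * (1 - p) ^ t) ≤ μ (Ici t) := by
  have hceil : t ≤ ⌈t⌉₊ ∧ (⌈t⌉₊ : ℝ) ≤ t + 1 := ⟨Nat.le_ceil t, (Nat.ceil_lt_add_one ht).le⟩
  calc ENNReal.ofReal ((1 - p) * (1 - p) ^ t)
      ≤ ENNReal.ofReal (1 - p) ^ ⌈t⌉₊ := by
        rw [← ENNReal.ofReal_pow (by linarith), ← Real.rpow_natCast]
        refine ENNReal.ofReal_le_ofReal ?_
        rw [← Real.rpow_one_add' (by linarith) (by linarith), add_comm]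
        exact Real.rpow_le_rpow_of_exponent_ge (by linarith) (by linarith) hceil.2
    _ = ENNReal.ofReal (1 - p) ^ ⌈t⌉₊ * μ (Ici (t - ⌈t⌉₊)) := by
        rw [measure_Ici_eq_one_of_nonpos hμ (by linarith), mul_one]
    _ ≤ μ (Ici t) := h.ofReal_one_sub_pow_mul_measure_Ici_le t _

lemma one_sub_mul_exp_mul_truncExpMoment_le [IsFiniteMeasure μ] (h : HPStationary a p μ)
    (hp0 : 0 ≤ p) (hp1 : p ≤ 1) {B θ : ℝ} (hB : 0 ≤ B) (hθ : 0 ≤ θ) :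
    (1 - (1 - p) * Real.exp θ) * truncExpMoment μ B θ ≤ p * truncExpMoment μ B (a * θ) := by
  have hsplit := h.integral_eq hp0 hp1 (f := fun x => min (Real.exp (θ * x)) B) (by fun_prop)
    (integrable_min_exp hB θ)
  have hdilate : ∫ x, min (Real.exp (θ * (a * x))) B ∂μ = truncExpMoment μ B (a * θ) := by
    simp only [truncExpMoment, mul_left_comm θ a, mul_assoc]
  have hshift : ∫ x, min (Real.exp (θ * (x + 1))) B ∂μ ≤ Real.exp θ * truncExpMoment μ B θ := by
    rw [truncExpMoment, ← integral_const_mul]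
    refine integral_mono_of_nonneg (ae_of_all _ fun x => le_min (Real.exp_pos _).le hB)
      ((integrable_min_exp hB θ).const_mul _) (ae_of_all _ fun x => ?_)
    dsimp only
    rw [mul_min_of_nonneg _ _ (Real.exp_pos θ).le, mul_add_one, Real.exp_add, mul_comm]
    exact min_le_min le_rfl (le_mul_of_one_le_left hB (Real.one_le_exp hθ))
  change truncExpMoment μ B θ = _ at hsplit
  rw [hdilate] at hsplit
  nlinarith [mul_le_mul_of_nonneg_left hshift (sub_nonneg.2 hp1)]

lemma truncExpMoment_le_exp_mul [IsFiniteMeasure μ] (h : HPStationary a p μ) (ha1 : a < 1)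
    (hp0 : 0 < p) (hp1 : p ≤ 1) {B Θ : ℝ} (hB : 0 ≤ B) (hΘ : 0 ≤ Θ)
    (hpΘ : (1 - p) * Real.exp Θ ≤ 1) {e : ℝ} (he0 : 0 ≤ e) (hea : e ≤ a) :
    truncExpMoment μ B (e * Θ) ≤ Real.exp (e / (1 - a)) * truncExpMoment μ B (a * (e * Θ)) := by
  have h1a : 0 < 1 - a := sub_pos.2 ha1
  have hstep := h.one_sub_mul_exp_mul_truncExpMoment_le hp0.le hp1 hB (mul_nonneg he0 hΘ)
  have hfactor := mul_one_sub_le_one_sub_mul_exp_mul hp1 he0 (hea.trans ha1.le) hpΘ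
  have hM := truncExpMoment_nonneg (μ := μ) hB (e * Θ)
  have hcontract : (1 - e) * truncExpMoment μ B (e * Θ) ≤ truncExpMoment μ B (a * (e * Θ)) :=
    le_of_mul_le_mul_left (by nlinarith [mul_le_mul_of_nonneg_right hfactor hM]) hp0
  have hratio : 1 ≤ (1 - e) * Real.exp (e / (1 - a)) := by
    have : e ≤ e / (1 - a) * (1 - e) := by
      rw [div_mul_eq_mul_div, le_div_iff₀ h1a]; nlinarith
    calc 1 ≤ (1 - e) * (e / (1 - a) + 1) := by nlinarith
      _ ≤ (1 - e) * Real.exp (e / (1 - a)) := by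
        gcongr
        · linarith
        · exact Real.add_one_le_exp _
  calc truncExpMoment μ B (e * Θ)
      ≤ (1 - e) * Real.exp (e / (1 - a)) * truncExpMoment μ B (e * Θ) :=
        le_mul_of_one_le_left hM hratio
    _ = Real.exp (e / (1 - a)) * ((1 - e) * truncExpMoment μ B (e * Θ)) := by ring
    _ ≤ Real.exp (e / (1 - a)) * truncExpMoment μ B (a * (e * Θ)) := by gcongr

lemma truncExpMoment_le_exp_mul_pow [IsFiniteMeasure μ] (h : HPStationary a p μ) (ha0 : 0 < a)
    (ha1 : a < 1) (hp0 : 0 < p) (hp1 : p ≤ 1) {B Θ : ℝ} (hB : 0 ≤ B) (hΘ : 0 ≤ Θ)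
    (hpΘ : (1 - p) * Real.exp Θ ≤ 1) (k : ℕ) {e : ℝ} (he0 : 0 ≤ e) (hea : e ≤ a) :
    truncExpMoment μ B (e * Θ)
      ≤ Real.exp (e / (1 - a) ^ 2) * truncExpMoment μ B (a ^ k * (e * Θ)) := by
  induction k generalizing e with
  | zero =>
    rw [pow_zero, one_mul]
    exact le_mul_of_one_le_left (truncExpMoment_nonneg hB _) (Real.one_le_exp (by positivity))
  | succ k ih =>
    have h1a : 0 < 1 - a := sub_pos.2 ha1
    calc truncExpMoment μ B (e * Θ)
        ≤ Real.exp (e / (1 - a)) * truncExpMoment μ B ((a * e) * Θ) := by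
          rw [mul_assoc]
          exact h.truncExpMoment_le_exp_mul ha1 hp0 hp1 hB hΘ hpΘ he0 hea
      _ ≤ Real.exp (e / (1 - a)) *
            (Real.exp (a * e / (1 - a) ^ 2) * truncExpMoment μ B (a ^ k * ((a * e) * Θ))) := by
          gcongr
          exact ih (by positivity) (mul_le_of_le_one_right ha0.le (hea.trans ha1.le))
      _ = Real.exp (e / (1 - a) ^ 2) * truncExpMoment μ B (a ^ (k + 1) * (e * Θ)) := by
          rw [← mul_assoc, ← Real.exp_add]
          congr 2
          · field_simp
            ring
          · ring

lemma truncExpMoment_le_exp [IsProbabilityMeasure μ] (h : HPStationary a p μ) (ha0 : 0 < a)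
    (ha1 : a < 1) (hp0 : 0 < p) (hp1 : p ≤ 1) {B Θ : ℝ} (hB : 1 ≤ B) (hΘ : 0 ≤ Θ)
    (hpΘ : (1 - p) * Real.exp Θ ≤ 1) {e : ℝ} (he0 : 0 ≤ e) (hea : e ≤ a) :
    truncExpMoment μ B (e * Θ) ≤ Real.exp (e / (1 - a) ^ 2) := by
  have hlim : Tendsto
      (fun k : ℕ => Real.exp (e / (1 - a) ^ 2) * truncExpMoment μ B (a ^ k * (e * Θ))) atTop
      (𝓝 (Real.exp (e / (1 - a) ^ 2) * truncExpMoment μ B 0)) := by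
    refine ((continuous_truncExpMoment (zero_le_one.trans hB)).tendsto 0).comp ?_ |>.const_mul _
    simpa using (tendsto_pow_atTop_nhds_zero_of_lt_one ha0.le ha1).mul_const (e * Θ)
  rw [truncExpMoment_zero hB, mul_one] at hlim
  exact ge_of_tendsto' hlim fun k =>
    h.truncExpMoment_le_exp_mul_pow ha0 ha1 hp0 hp1 (zero_le_one.trans hB) hΘ hpΘ k he0 hea

lemma one_sub_mul_exp_mul_truncExpMoment_le_exp [IsProbabilityMeasure μ] (h : HPStationary a p μ)
    (ha0 : 0 < a) (ha1 : a < 1) (hp0 : 0 < p) (hp1 : p ≤ 1) {B Θ : ℝ} (hB : 1 ≤ B) (hΘ : 0 ≤ Θ)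
    (hpΘ : (1 - p) * Real.exp Θ ≤ 1) :
    (1 - (1 - p) * Real.exp Θ) * truncExpMoment μ B Θ ≤ p * Real.exp (a / (1 - a) ^ 2) :=
  (h.one_sub_mul_exp_mul_truncExpMoment_le hp0.le hp1 (zero_le_one.trans hB) hΘ).trans <|
    mul_le_mul_of_nonneg_left (h.truncExpMoment_le_exp ha0 ha1 hp0 hp1 hB hΘ hpΘ ha0.le le_rfl)
      hp0.le

lemma measure_Ici_le [IsProbabilityMeasure μ] (h : HPStationary a p μ) (ha0 : 0 < a)
    (ha1 : a < 1) (hp0 : 0 < p) (hp1 : p < 1) {t : ℝ} (ht : 1 ≤ t) :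
    μ (Ici t) ≤ ENNReal.ofReal (4 * Real.exp (a / (1 - a) ^ 2) * t * (1 - p) ^ t) := by
  set K := Real.exp (a / (1 - a) ^ 2)
  have hq : 0 < 1 - p := sub_pos.2 hp1
  have ht0 : 0 < t := zero_lt_one.trans_le ht
  set r := 1 - p / (2 * t)
  have hr : 1 - p ≤ r := by
    have : p / (2 * t) ≤ p := div_le_self hp0.le (by linarith)
    linarith
  set Θ := Real.log (r / (1 - p))
  have hexpΘ : (1 - p) * Real.exp Θ = r := by
    rw [Real.exp_log (div_pos (hq.trans_le hr) hq), mul_div_cancel₀ _ hq.ne']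
  have hΘ : 0 ≤ Θ := Real.log_nonneg ((one_le_div hq).2 hr)
  have hB : 1 ≤ Real.exp (Θ * t) := Real.one_le_exp (mul_nonneg hΘ ht0.le)
  have hBq : Real.exp (Θ * t) * (1 - p) ^ t = r ^ t := by
    rw [Real.exp_mul, ← Real.mul_rpow (Real.exp_pos _).le hq.le, mul_comm, hexpΘ]
  have hbernoulli : 1 / 2 ≤ r ^ t := half_le_one_sub_div_rpow hp1.le ht
  have hmoment : truncExpMoment μ (Real.exp (Θ * t)) Θ ≤ 2 * t * K := by
    have hr1 : r ≤ 1 := by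
      have : 0 ≤ p / (2 * t) := by positivity
      linarith
    have hbound := h.one_sub_mul_exp_mul_truncExpMoment_le_exp ha0 ha1 hp0 hp1.le hB hΘ
      (hexpΘ.trans_le hr1)
    rw [hexpΘ, show 1 - r = p / (2 * t) by ring, div_mul_eq_mul_div,
      div_le_iff₀ (by positivity)] at hbound
    exact le_of_mul_le_mul_left (by linarith) hp0
  have hmarkov := exp_mul_measureReal_Ici_le (μ := μ) hΘ t
  have hm := measureReal_nonneg (μ := μ) (s := Ici t)
  rw [← ofReal_measureReal]
  refine ENNReal.ofReal_le_ofReal ?_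
  calc μ.real (Ici t) = 2 * (1 / 2 * μ.real (Ici t)) := by ring
    _ ≤ 2 * (r ^ t * μ.real (Ici t)) := by gcongr
    _ = 2 * ((Real.exp (Θ * t) * μ.real (Ici t)) * (1 - p) ^ t) := by rw [← hBq]; ring
    _ ≤ 2 * (2 * t * K * (1 - p) ^ t) := by gcongr 2 * (?_ * _); exact hmarkov.trans hmoment
    _ = 4 * K * t * (1 - p) ^ t := by ring

end HPStationary

/-- **Corollary (tail estimate for `μ_{a,p}`).** For all `p, a ∈ (0,1)` there are
constants `c, C > 0` such that for all `t ≥ 1`: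
`c·(1-p)^t ≤ μ_{a,p}([t,∞)) ≤ C·t·(1-p)^t`. -/
theorem stmt12 (a p : ℝ) (ha : a ∈ Set.Ioo (0:ℝ) 1) (hp : p ∈ Set.Ioo (0:ℝ) 1)
    (μ : Measure ℝ) (hμprob : IsProbabilityMeasure μ)
    (hμpos : μ (Set.Iio (0:ℝ)) = 0) (hμstat : HPStationary a p μ) :
    ∃ c C : ℝ, 0 < c ∧ 0 < C ∧ ∀ t : ℝ, 1 ≤ t →
      ENNReal.ofReal (c * (1 - p) ^ t) ≤ μ (Set.Ici t) ∧
      μ (Set.Ici t) ≤ ENNReal.ofReal (C * t * (1 - p) ^ t) := by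
  refine ⟨1 - p, 4 * Real.exp (a / (1 - a) ^ 2), sub_pos.2 hp.2, by positivity,
    fun t ht => ⟨?_, ?_⟩⟩
  · exact hμstat.ofReal_mul_rpow_le_measure_Ici hμpos hp.1.le hp.2 (zero_le_one.trans ht)
  · exact hμstat.measure_Ici_le ha.1 ha.2 hp.1 hp.2 ht
end
end

section
/- For any two IFS (Φ₀,η₀) and (Φ₁,η₁) on a complete separable metric space (X,d) with Lipschitz maps, any q > 0, any x₀ ∈ X and any ν ∈ 𝒫_q(X): W_q(L₀*ν, L₁*ν) ≤ D·W_{x₀,q}((Φ₀,η₀),(Φ₁,η₁)), where L₀*, L₁* are the dual transfer operators of the two IFS, D = 1 + m_{x₀}^q(ν) when q ≤ 1, and D = 2^{1−1/q}·(1 + m_{x₀}^q(ν))^{1/q} when q > 1. -/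
open MeasureTheory ENNReal NNReal Set Metric Filter Topology

noncomputable section

/-- The pointed Lipschitz distance between maps:
`d_{x₀}(f,g) = sup_x d(f(x),g(x))/(1+d(x,x₀))`. -/
def mapDist {X : Type*} [MetricSpace X] (x₀ : X) (f g : X → X) : ℝ≥0∞ :=
  ⨆ x : X, ENNReal.ofReal (dist (f x) (g x) / (1 + dist x x₀))

/-- The Wasserstein-like cost between two IFS:
`C_{x₀,q} = inf over couplings γ of η₀,η₁ of ∫ d_{x₀}(φ_i,ψ_j)^q dγ(i,j)`. -/
def ifsCost {X : Type*} [MetricSpace X] {I₀ I₁ : Type*}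
    [MeasurableSpace I₀] [MeasurableSpace I₁] (q : ℝ) (x₀ : X)
    (φ : I₀ → X → X) (η₀ : Measure I₀) (ψ : I₁ → X → X) (η₁ : Measure I₁) : ℝ≥0∞ :=
  ⨅ (γ : Measure (I₀ × I₁)) (_ : IsCoupling γ η₀ η₁),
    ∫⁻ p, (mapDist x₀ (φ p.1) (ψ p.2)) ^ q ∂γ

/-- The Wasserstein-like distance between two IFS: `W_{x₀,q} = C_{x₀,q}^{min(1,1/q)}`. -/
def ifsDist {X : Type*} [MetricSpace X] {I₀ I₁ : Type*}
    [MeasurableSpace I₀] [MeasurableSpace I₁] (q : ℝ) (x₀ : X)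
    (φ : I₀ → X → X) (η₀ : Measure I₀) (ψ : I₁ → X → X) (η₁ : Measure I₁) : ℝ≥0∞ :=
  ifsCost q x₀ φ η₀ ψ η₁ ^ min 1 (1 / q)

/-!
Sample `(i, j)` from a coupling `γ` of `η₀` and `η₁` and, independently, `x` from `ν`; the image
of `γ ⊗ ν` under `(i, j, x) ↦ (φ_i x, ψ_j x)` couples `L₀*ν` and `L₁*ν`. Its cost is at most
`∫ d_{x₀}(φ_i, ψ_j)^q (1 + d(x, x₀))^q`, which factors as the cost of `γ` times
`∫ (1 + d(x, x₀))^q dν`, and the latter is at most `1 + m` for `q ≤ 1` (subadditivity of `t ↦ t^q`)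
and `2^{q-1}(1 + m)` for `q > 1` (convexity). Taking the infimum over `γ` and the power
`min(1, 1/q)` gives the claim. Separability of `X` is what makes `(i, j) ↦ d_{x₀}(φ_i, ψ_j)`
measurable: the supremum defining it may be taken over a countable dense set.
-/

section MapDist

variable {X : Type*} [MetricSpace X]

lemma mapDist_eq_iSup_dense (x₀ : X) {f g : X → X} (hf : Continuous f) (hg : Continuous g)
    {s : Set X} (hs : Dense s) :
    mapDist x₀ f g = ⨆ x : s, ENNReal.ofReal (dist (f x) (g x) / (1 + dist (x : X) x₀)) := by
  refine (hs.ciSup' (ENNReal.continuous_ofReal.comp ?_)).symm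
  exact (hf.dist hg).div (by fun_prop) fun x => by positivity

lemma measurable_mapDist [MeasurableSpace X] [BorelSpace X] [TopologicalSpace.SeparableSpace X]
    {α β : Type*} [MeasurableSpace α] [MeasurableSpace β] (x₀ : X) {F : α → X → X}
    {G : β → X → X} (hFc : ∀ a, Continuous (F a)) (hGc : ∀ b, Continuous (G b))
    (hF : Measurable (Function.uncurry F)) (hG : Measurable (Function.uncurry G)) :
    Measurable fun p : α × β => mapDist x₀ (F p.1) (G p.2) := by
  obtain ⟨s, hsc, hsd⟩ := TopologicalSpace.exists_countable_dense X
  have : Countable s := hsc.to_subtype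
  simp_rw [mapDist_eq_iSup_dense x₀ (hFc _) (hGc _) hsd]
  refine Measurable.iSup fun x => ENNReal.measurable_ofReal.comp ?_
  exact ((hF.comp (measurable_fst.prodMk measurable_const)).dist
    (hG.comp (measurable_snd.prodMk measurable_const))).div_const _

lemma ofReal_dist_rpow_le_mapDist_rpow_mul (x₀ : X) (f g : X → X) {q : ℝ} (hq : 0 ≤ q)
    (x : X) :
    ENNReal.ofReal (dist (f x) (g x) ^ q)
      ≤ mapDist x₀ f g ^ q * ENNReal.ofReal ((1 + dist x x₀) ^ q) := by
  have hpos : (0 : ℝ) < 1 + dist x x₀ := by positivity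
  rw [← ENNReal.ofReal_rpow_of_nonneg dist_nonneg hq,
    ← ENNReal.ofReal_rpow_of_nonneg hpos.le hq, ← ENNReal.mul_rpow_of_nonneg _ _ hq]
  refine ENNReal.rpow_le_rpow ?_ hq
  rw [← div_mul_cancel₀ (dist (f x) (g x)) hpos.ne', ENNReal.ofReal_mul (by positivity)]
  exact mul_le_mul_left
    (le_iSup (fun z => ENNReal.ofReal (dist (f z) (g z) / (1 + dist z x₀))) x) _

lemma ofReal_one_add_dist_rpow (x₀ : X) {q : ℝ} (hq : 0 ≤ q) (x : X) :
    ENNReal.ofReal ((1 + dist x x₀) ^ q) = (1 + ENNReal.ofReal (dist x x₀)) ^ q := by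
  rw [← ENNReal.ofReal_rpow_of_nonneg (by positivity) hq,
    ENNReal.ofReal_add zero_le_one dist_nonneg, ENNReal.ofReal_one]

end MapDist

section Coupling

variable {X I α : Type*} [MeasurableSpace X] [MeasurableSpace I] [MeasurableSpace α]

lemma IsCoupling.isProbabilityMeasure {β : Type*} [MeasurableSpace β] {γ : Measure (α × β)}
    {μ₀ : Measure α} {μ₁ : Measure β} [IsProbabilityMeasure μ₀] (hγ : IsCoupling γ μ₀ μ₁) :
    IsProbabilityMeasure γ :=
  have : IsProbabilityMeasure (γ.map Prod.fst) := hγ.1 ▸ inferInstance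
  Measure.isProbabilityMeasure_of_map Prod.fst

lemma isCoupling_prod {β : Type*} [MeasurableSpace β] (μ₀ : Measure α) (μ₁ : Measure β)
    [IsProbabilityMeasure μ₀] [IsProbabilityMeasure μ₁] : IsCoupling (μ₀.prod μ₁) μ₀ μ₁ := by
  simp [IsCoupling, Measure.map_fst_prod, Measure.map_snd_prod]

lemma dualTransfer_eq_map_prod_s14 {φ : I → X → X} (hφ : Measurable (Function.uncurry φ))
    (η : Measure I) (ν : Measure X) [SFinite ν] :
    dualTransfer φ η ν = (η.prod ν).map (Function.uncurry φ) := by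
  have hφi : ∀ i, Measurable (φ i) := fun i => hφ.comp measurable_prodMk_left
  have hmap : Measurable fun i => ν.map (φ i) := by
    refine Measure.measurable_of_measurable_coe _ fun t ht => ?_
    simp_rw [Measure.map_apply (hφi _) ht]
    exact measurable_measure_prodMk_left (hφ ht)
  ext t ht
  rw [dualTransfer, Measure.bind_apply ht hmap.aemeasurable, Measure.map_apply hφ ht,
    Measure.prod_apply (hφ ht)]
  exact lintegral_congr fun i => Measure.map_apply (hφi i) ht

lemma map_prod_eq_dualTransfer_map {φ : I → X → X} (hφ : Measurable (Function.uncurry φ))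
    {f : α → I} (hf : Measurable f) (μ : Measure α) (ν : Measure X) [SFinite μ] [SFinite ν] :
    (μ.prod ν).map (fun p => φ (f p.1) p.2) = dualTransfer φ (μ.map f) ν := by
  rw [dualTransfer_eq_map_prod_s14 hφ, ← Measure.map_id (μ := ν),
    Measure.map_prod_map μ ν hf measurable_id, Measure.map_id,
    Measure.map_map hφ (hf.prodMap measurable_id)]
  rfl

lemma isCoupling_map_prod_dualTransfer {I₁ : Type*} [MeasurableSpace I₁]
    {φ : I → X → X} {ψ : I₁ → X → X}
    (hφ : Measurable (Function.uncurry φ)) (hψ : Measurable (Function.uncurry ψ))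
    {η₀ : Measure I} {η₁ : Measure I₁} {γ : Measure (I × I₁)} [SFinite γ]
    (hγ : IsCoupling γ η₀ η₁) (ν : Measure X) [SFinite ν] :
    IsCoupling ((γ.prod ν).map fun p => (φ p.1.1 p.2, ψ p.1.2 p.2))
      (dualTransfer φ η₀ ν) (dualTransfer ψ η₁ ν) := by
  have hT : Measurable fun p : (I × I₁) × X => (φ p.1.1 p.2, ψ p.1.2 p.2) :=
    (hφ.comp (f := fun p : (I × I₁) × X => (p.1.1, p.2)) (by fun_prop)).prodMk
      (hψ.comp (f := fun p : (I × I₁) × X => (p.1.2, p.2)) (by fun_prop))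
  constructor
  · rw [Measure.map_map measurable_fst hT, ← hγ.1]
    exact map_prod_eq_dualTransfer_map hφ measurable_fst γ ν
  · rw [Measure.map_map measurable_snd hT, ← hγ.2]
    exact map_prod_eq_dualTransfer_map hψ measurable_snd γ ν

end Coupling

section Cost

variable {X : Type*} [MetricSpace X] [MeasurableSpace X] [BorelSpace X]
  {I₀ I₁ : Type*} [MeasurableSpace I₀] [MeasurableSpace I₁]
  {φ : I₀ → X → X} {ψ : I₁ → X → X} {q : ℝ} {x₀ : X}

lemma wCost_dualTransfer_le_lintegral_mul
    (hφ : Measurable (Function.uncurry φ)) (hψ : Measurable (Function.uncurry ψ))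
    (hd : Measurable fun p : I₀ × I₁ => mapDist x₀ (φ p.1) (ψ p.2)) (hq : 0 ≤ q)
    {η₀ : Measure I₀} {η₁ : Measure I₁} {γ : Measure (I₀ × I₁)} [SFinite γ]
    (hγ : IsCoupling γ η₀ η₁) (ν : Measure X) [SFinite ν] :
    wCost q (dualTransfer φ η₀ ν) (dualTransfer ψ η₁ ν)
      ≤ (∫⁻ p, mapDist x₀ (φ p.1) (ψ p.2) ^ q ∂γ)
          * ∫⁻ x, ENNReal.ofReal ((1 + dist x x₀) ^ q) ∂ν := by
  have hweight : Measurable fun x : X => ENNReal.ofReal ((1 + dist x x₀) ^ q) :=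
    ENNReal.measurable_ofReal.comp
      ((continuous_const.add (continuous_id.dist continuous_const)).measurable.pow_const q)
  calc wCost q (dualTransfer φ η₀ ν) (dualTransfer ψ η₁ ν)
      ≤ ∫⁻ p, ENNReal.ofReal (dist p.1 p.2 ^ q)
          ∂((γ.prod ν).map fun p => (φ p.1.1 p.2, ψ p.1.2 p.2)) :=
        iInf₂_le ((γ.prod ν).map fun p => (φ p.1.1 p.2, ψ p.1.2 p.2))
          (isCoupling_map_prod_dualTransfer hφ hψ hγ ν)
    _ ≤ ∫⁻ p, ENNReal.ofReal (dist (φ p.1.1 p.2) (ψ p.1.2 p.2) ^ q) ∂(γ.prod ν) :=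
        lintegral_map_le _ _
    _ ≤ ∫⁻ p, mapDist x₀ (φ p.1.1) (ψ p.1.2) ^ q
          * ENNReal.ofReal ((1 + dist p.2 x₀) ^ q) ∂(γ.prod ν) :=
        lintegral_mono fun p => ofReal_dist_rpow_le_mapDist_rpow_mul x₀ _ _ hq _
    _ = _ := lintegral_prod_mul (hd.pow_const q).aemeasurable hweight.aemeasurable

lemma wCost_dualTransfer_le_mul_ifsCost
    (hφ : Measurable (Function.uncurry φ)) (hψ : Measurable (Function.uncurry ψ))
    (hd : Measurable fun p : I₀ × I₁ => mapDist x₀ (φ p.1) (ψ p.2)) (hq : 0 ≤ q)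
    (η₀ : Measure I₀) (η₁ : Measure I₁) [IsProbabilityMeasure η₀] [IsProbabilityMeasure η₁]
    (ν : Measure X) [SFinite ν] {C : ℝ≥0∞} (hC : C ≠ ∞)
    (hweight : ∫⁻ x, ENNReal.ofReal ((1 + dist x x₀) ^ q) ∂ν ≤ C) :
    wCost q (dualTransfer φ η₀ ν) (dualTransfer ψ η₁ ν) ≤ C * ifsCost q x₀ φ η₀ ψ η₁ := by
  have : Nonempty {γ : Measure (I₀ × I₁) // IsCoupling γ η₀ η₁} :=
    ⟨⟨_, isCoupling_prod η₀ η₁⟩⟩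
  rw [ifsCost, iInf_subtype', ENNReal.mul_iInf fun h => absurd h hC]
  refine le_iInf fun ⟨γ, hγ⟩ => ?_
  have := hγ.isProbabilityMeasure
  calc wCost q (dualTransfer φ η₀ ν) (dualTransfer ψ η₁ ν)
      ≤ (∫⁻ p, mapDist x₀ (φ p.1) (ψ p.2) ^ q ∂γ)
          * ∫⁻ x, ENNReal.ofReal ((1 + dist x x₀) ^ q) ∂ν :=
        wCost_dualTransfer_le_lintegral_mul hφ hψ hd hq hγ ν
    _ ≤ (∫⁻ p, mapDist x₀ (φ p.1) (ψ p.2) ^ q ∂γ) * C := by gcongr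
    _ = C * ∫⁻ p, mapDist x₀ (φ p.1) (ψ p.2) ^ q ∂γ := mul_comm _ _

end Cost

section Moment

variable {X : Type*} [MetricSpace X] [MeasurableSpace X] {q : ℝ} (x₀ : X) (ν : Measure X)
  [IsProbabilityMeasure ν]

lemma lintegral_one_add_ofReal_dist_rpow :
    ∫⁻ x, (1 + ENNReal.ofReal (dist x x₀ ^ q)) ∂ν = 1 + moment q x₀ ν := by
  rw [lintegral_add_left measurable_const, lintegral_const, measure_univ, mul_one, moment]

lemma lintegral_one_add_dist_rpow_le_of_le_one (hq : 0 ≤ q) (hq1 : q ≤ 1) :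
    ∫⁻ x, ENNReal.ofReal ((1 + dist x x₀) ^ q) ∂ν ≤ 1 + moment q x₀ ν := by
  rw [← lintegral_one_add_ofReal_dist_rpow]
  refine lintegral_mono fun x => ?_
  calc ENNReal.ofReal ((1 + dist x x₀) ^ q)
      = (1 + ENNReal.ofReal (dist x x₀)) ^ q := ofReal_one_add_dist_rpow x₀ hq x
    _ ≤ 1 ^ q + ENNReal.ofReal (dist x x₀) ^ q := ENNReal.rpow_add_le_add_rpow _ _ hq hq1
    _ = 1 + ENNReal.ofReal (dist x x₀ ^ q) := by
        rw [ENNReal.one_rpow, ENNReal.ofReal_rpow_of_nonneg dist_nonneg hq]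

lemma lintegral_one_add_dist_rpow_le_of_one_le (hq1 : 1 ≤ q) :
    ∫⁻ x, ENNReal.ofReal ((1 + dist x x₀) ^ q) ∂ν ≤ 2 ^ (q - 1) * (1 + moment q x₀ ν) := by
  have hq : 0 ≤ q := zero_le_one.trans hq1
  rw [← lintegral_one_add_ofReal_dist_rpow, ← lintegral_const_mul' _ _ (by finiteness)]
  refine lintegral_mono fun x => ?_
  calc ENNReal.ofReal ((1 + dist x x₀) ^ q)
      = (1 + ENNReal.ofReal (dist x x₀)) ^ q := ofReal_one_add_dist_rpow x₀ hq x
    _ ≤ 2 ^ (q - 1) * (1 ^ q + ENNReal.ofReal (dist x x₀) ^ q) :=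
        ENNReal.rpow_add_le_mul_rpow_add_rpow _ _ hq1
    _ = 2 ^ (q - 1) * (1 + ENNReal.ofReal (dist x x₀ ^ q)) := by
        rw [ENNReal.one_rpow, ENNReal.ofReal_rpow_of_nonneg dist_nonneg hq]

end Moment

theorem stmt14_general
    {X : Type*} [MetricSpace X] [TopologicalSpace.SeparableSpace X]
    [MeasurableSpace X] [BorelSpace X]
    {I₀ I₁ : Type*} [MeasurableSpace I₀] [MeasurableSpace I₁]
    (φ : I₀ → X → X) (ψ : I₁ → X → X)
    (hφlip : ∀ i, ∃ K : ℝ≥0, LipschitzWith K (φ i))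
    (hψlip : ∀ j, ∃ K : ℝ≥0, LipschitzWith K (ψ j))
    (hφmeas : Measurable fun p : I₀ × X => φ p.1 p.2)
    (hψmeas : Measurable fun p : I₁ × X => ψ p.1 p.2)
    (η₀ : Measure I₀) (η₁ : Measure I₁)
    [IsProbabilityMeasure η₀] [IsProbabilityMeasure η₁]
    (q : ℝ) (hq : 0 < q) (x₀ : X)
    (ν : Measure X) (hνprob : IsProbabilityMeasure ν) (hνmom : moment q x₀ ν < ∞) :
    (q ≤ 1 → wDist q (dualTransfer φ η₀ ν) (dualTransfer ψ η₁ ν)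
      ≤ (1 + moment q x₀ ν) * ifsDist q x₀ φ η₀ ψ η₁) ∧
    (1 < q → wDist q (dualTransfer φ η₀ ν) (dualTransfer ψ η₁ ν)
      ≤ ENNReal.ofReal (2 ^ (1 - 1/q)) * (1 + moment q x₀ ν) ^ (1/q)
          * ifsDist q x₀ φ η₀ ψ η₁) := by
  have hd := measurable_mapDist x₀ (fun i => (hφlip i).choose_spec.continuous)
    (fun j => (hψlip j).choose_spec.continuous) hφmeas hψmeas
  have hm : moment q x₀ ν ≠ ∞ := hνmom.ne
  refine ⟨fun hq1 => ?_, fun hq1 => ?_⟩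
  · have hcost := wCost_dualTransfer_le_mul_ifsCost hφmeas hψmeas hd hq.le η₀ η₁ ν
      (by finiteness) (lintegral_one_add_dist_rpow_le_of_le_one x₀ ν hq.le hq1)
    rwa [wDist, ifsDist, min_eq_left ((one_le_div hq).2 hq1), ENNReal.rpow_one,
      ENNReal.rpow_one]
  · have hcost := wCost_dualTransfer_le_mul_ifsCost hφmeas hψmeas hd hq.le η₀ η₁ ν
      (by finiteness) (lintegral_one_add_dist_rpow_le_of_one_le x₀ ν hq1.le)
    have hinv : 0 ≤ 1 / q := by positivity
    rw [wDist, ifsDist, min_eq_right ((div_le_one hq).2 hq1.le)]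
    calc wCost q (dualTransfer φ η₀ ν) (dualTransfer ψ η₁ ν) ^ (1 / q)
        ≤ (2 ^ (q - 1) * (1 + moment q x₀ ν) * ifsCost q x₀ φ η₀ ψ η₁) ^ (1 / q) :=
          ENNReal.rpow_le_rpow hcost hinv
      _ = _ := by
          rw [ENNReal.mul_rpow_of_nonneg _ _ hinv, ENNReal.mul_rpow_of_nonneg _ _ hinv,
            ← ENNReal.rpow_mul, ← ENNReal.ofReal_rpow_of_pos two_pos, ENNReal.ofReal_ofNat]
          congr 3
          field_simp

/-- **Lemma.** For any two IFS with Lipschitz maps, any `q > 0` and any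
`ν ∈ 𝒫_q(X)`: `W_q(L₀*ν, L₁*ν) ≤ D·W_{x₀,q}((Φ₀,η₀),(Φ₁,η₁))`, with
`D = 1 + m_{x₀}^q(ν)` when `q ≤ 1` and `D = 2^{1-1/q}(1+m_{x₀}^q(ν))^{1/q}`
when `q > 1`. -/
theorem stmt14
    {X : Type*} [MetricSpace X] [CompleteSpace X] [TopologicalSpace.SeparableSpace X]
    [MeasurableSpace X] [BorelSpace X]
    {I₀ I₁ : Type*} [MeasurableSpace I₀] [MeasurableSpace I₁]
    (φ : I₀ → X → X) (ψ : I₁ → X → X)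
    (hφlip : ∀ i, ∃ K : ℝ≥0, LipschitzWith K (φ i))
    (hψlip : ∀ j, ∃ K : ℝ≥0, LipschitzWith K (ψ j))
    (hφmeas : Measurable fun p : I₀ × X => φ p.1 p.2)
    (hψmeas : Measurable fun p : I₁ × X => ψ p.1 p.2)
    (η₀ : Measure I₀) (η₁ : Measure I₁)
    [IsProbabilityMeasure η₀] [IsProbabilityMeasure η₁]
    (q : ℝ) (hq : 0 < q) (x₀ : X)
    (ν : Measure X) (hνprob : IsProbabilityMeasure ν) (hνmom : moment q x₀ ν < ∞) :
    (q ≤ 1 → wDist q (dualTransfer φ η₀ ν) (dualTransfer ψ η₁ ν)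
      ≤ (1 + moment q x₀ ν) * ifsDist q x₀ φ η₀ ψ η₁) ∧
    (1 < q → wDist q (dualTransfer φ η₀ ν) (dualTransfer ψ η₁ ν)
      ≤ ENNReal.ofReal (2 ^ (1 - 1/q)) * (1 + moment q x₀ ν) ^ (1/q)
          * ifsDist q x₀ φ η₀ ψ η₁) :=
  stmt14_general φ ψ hφlip hψlip hφmeas hψmeas η₀ η₁ q hq x₀ ν hνprob hνmom
end
end
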